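/- arXiv:math/9905040 — 4 statements merged into one kernel-verified Lean document; each statement's English description precedes it below -/
import Mathlib

section
/- Let f : ℝ → ℝ be smooth and periodic with only non-degenerate critical points, having at least n local maxima and at least n local minima. Then for every real a ≠ 0, the function g_a(t) = f(t) + a·f'(t) has at least n local maxima. -/
open Filter Set Topology
open scoped ContDiff

/-- If the derivative is positive at `p`, values just to the right are larger. -/
lemma my_deriv_pos_right {g : ℝ → ℝ} {p : ℝ} (hg : DifferentiableAt ℝ g p)
    (h : 0 < deriv g p) : ∀ᶠ t in 𝓝[>] p, g p < g t := by
  have hs := (hasDerivAt_iff_tendsto_slope.1 hg.hasDerivAt).eventually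
    (eventually_gt_nhds h)
  have hs' : ∀ᶠ t in 𝓝[>] p, 0 < slope g p t :=
    hs.filter_mono (nhdsWithin_mono p fun x hx => ne_of_gt hx)
  filter_upwards [hs', self_mem_nhdsWithin] with t ht ht'
  have hpt : (0:ℝ) < t - p := sub_pos.2 ht'
  have := mul_pos ht hpt
  rw [slope_def_field] at this
  have : 0 < g t - g p := by
    have hne : t - p ≠ 0 := ne_of_gt hpt
    field_simp at this
    nlinarith [this]
  linarith

lemma my_deriv_pos_left {g : ℝ → ℝ} {p : ℝ} (hg : DifferentiableAt ℝ g p)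
    (h : 0 < deriv g p) : ∀ᶠ t in 𝓝[<] p, g t < g p := by
  have hs := (hasDerivAt_iff_tendsto_slope.1 hg.hasDerivAt).eventually
    (eventually_gt_nhds h)
  have hs' : ∀ᶠ t in 𝓝[<] p, 0 < slope g p t :=
    hs.filter_mono (nhdsWithin_mono p fun x hx => ne_of_lt hx)
  filter_upwards [hs', self_mem_nhdsWithin] with t ht ht'
  have hpt : t - p < 0 := sub_neg.2 ht'
  rw [slope_def_field, div_pos_iff] at ht
  rcases ht with ⟨h1, h2⟩ | ⟨h1, h2⟩
  · linarith
  · linarith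

lemma my_deriv_neg_left {g : ℝ → ℝ} {p : ℝ} (hg : DifferentiableAt ℝ g p)
    (h : deriv g p < 0) : ∀ᶠ t in 𝓝[<] p, g p < g t := by
  have hg' : DifferentiableAt ℝ (fun x => -g x) p := hg.neg
  have hd : 0 < deriv (fun x => -g x) p := by
    rw [deriv.fun_neg]; linarith
  filter_upwards [my_deriv_pos_left hg' hd] with t ht
  simpa using ht

lemma my_deriv_neg_right {g : ℝ → ℝ} {p : ℝ} (hg : DifferentiableAt ℝ g p)
    (h : deriv g p < 0) : ∀ᶠ t in 𝓝[>] p, g t < g p := by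
  have hg' : DifferentiableAt ℝ (fun x => -g x) p := hg.neg
  have hd : 0 < deriv (fun x => -g x) p := by
    rw [deriv.fun_neg]; linarith
  filter_upwards [my_deriv_pos_right hg' hd] with t ht
  simpa using ht

/-- Second-derivative test, strict punctured version: strict local minimum. -/
lemma my_strict_min {f : ℝ → ℝ} {p : ℝ} (hfc : Continuous f)
    (hfd : Differentiable ℝ f) (hF1d : DifferentiableAt ℝ (deriv f) p)
    (h1 : deriv f p = 0) (h2 : 0 < deriv (deriv f) p) :
    ∀ᶠ t in 𝓝[≠] p, f p < f t := by
  have hR : ∀ᶠ t in 𝓝[>] p, 0 < deriv f t := by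
    filter_upwards [my_deriv_pos_right hF1d h2] with t ht; rw [h1] at ht; exact ht
  have hLft : ∀ᶠ t in 𝓝[<] p, deriv f t < 0 := by
    filter_upwards [my_deriv_pos_left hF1d h2] with t ht; rw [h1] at ht; exact ht
  rw [eventually_nhdsWithin_iff] at hR hLft
  rcases Metric.eventually_nhds_iff.1 hR with ⟨ε, hε, hball⟩
  rcases Metric.eventually_nhds_iff.1 hLft with ⟨ε', hε', hball'⟩
  have hmono : StrictMonoOn f (Icc p (p + ε/2)) := by
    apply strictMonoOn_of_deriv_pos (convex_Icc _ _) hfc.continuousOn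
    intro x hx
    rw [interior_Icc] at hx
    apply hball (show dist x p < ε by
      rw [Real.dist_eq, abs_of_pos (sub_pos.2 hx.1)]; linarith [hx.2]) hx.1
  have hanti : StrictAntiOn f (Icc (p - ε'/2) p) := by
    apply strictAntiOn_of_deriv_neg (convex_Icc _ _) hfc.continuousOn
    intro x hx
    rw [interior_Icc] at hx
    apply hball' (show dist x p < ε' by
      rw [Real.dist_eq, abs_of_neg (sub_neg.2 hx.2)]; linarith [hx.1]) hx.2
  rw [← nhdsLT_sup_nhdsGT p, eventually_sup]
  constructor
  · filter_upwards [Ioo_mem_nhdsLT_of_mem (show p ∈ Ioc (p - ε'/2) p from ⟨by linarith, le_refl p⟩)]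
      with t ht
    exact hanti ⟨le_of_lt ht.1, le_of_lt ht.2⟩ ⟨by linarith, le_refl p⟩ ht.2
  · filter_upwards [Ioo_mem_nhdsGT_of_mem (show p ∈ Ico p (p + ε/2) from ⟨le_refl p, by linarith⟩)]
      with t ht
    exact hmono ⟨le_refl p, by linarith [ht.2]⟩ ⟨le_of_lt ht.1, le_of_lt ht.2⟩ ht.1

/-- Second-derivative test, strict punctured version: strict local maximum. -/
lemma my_strict_max {f : ℝ → ℝ} {p : ℝ} (hfc : Continuous f)
    (hfd : Differentiable ℝ f) (hF1d : DifferentiableAt ℝ (deriv f) p)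
    (h1 : deriv f p = 0) (h2 : deriv (deriv f) p < 0) :
    ∀ᶠ t in 𝓝[≠] p, f t < f p := by
  have e1 : deriv (fun x => -f x) = fun x => -deriv f x := by
    funext x; exact deriv.neg
  have h1' : deriv (fun x => -f x) p = 0 := by rw [e1]; simp [h1]
  have h2' : 0 < deriv (deriv (fun x => -f x)) p := by
    rw [e1, deriv.fun_neg]; linarith
  have hF1d' : DifferentiableAt ℝ (deriv (fun x => -f x)) p := by
    rw [e1]; exact hF1d.neg
  filter_upwards [my_strict_min (f := fun x => -f x) (hfc.neg) (hfd.neg) hF1d' h1' h2']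
    with t ht
  simpa using ht

/-- If somewhere in `(p,q)` the function beats both endpoint values, there is an
interior local maximum. -/
lemma my_core {g : ℝ → ℝ} (hg : Continuous g) {p q : ℝ} (hpq : p < q)
    (h1 : ∃ t ∈ Ioo p q, g p < g t) (h2 : ∃ t ∈ Ioo p q, g q < g t) :
    ∃ t ∈ Ioo p q, IsLocalMax g t := by
  obtain ⟨t₀, ht₀, hmax⟩ := isCompact_Icc.exists_isMaxOn (nonempty_Icc.2 hpq.le)
    hg.continuousOn
  obtain ⟨u, hu, hu'⟩ := h1
  obtain ⟨v, hv, hv'⟩ := h2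
  have htu : g u ≤ g t₀ := hmax (Ioo_subset_Icc_self hu)
  have htv : g v ≤ g t₀ := hmax (Ioo_subset_Icc_self hv)
  have hne1 : t₀ ≠ p := by rintro rfl; linarith
  have hne2 : t₀ ≠ q := by rintro rfl; linarith
  have ht₀' : t₀ ∈ Ioo p q := ⟨lt_of_le_of_ne ht₀.1 (Ne.symm hne1), lt_of_le_of_ne ht₀.2 hne2⟩
  exact ⟨t₀, ht₀', hmax.isLocalMax (Icc_mem_nhds ht₀'.1 ht₀'.2)⟩

/-- If `g' > 0` at `p` and `g' < 0` at `q` with `p < q`, there is a local max in between. -/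
lemma my_main {g : ℝ → ℝ} (hg : Continuous g) (hgd : Differentiable ℝ g) {p q : ℝ}
    (hpq : p < q) (h1 : 0 < deriv g p) (h2 : deriv g q < 0) :
    ∃ t ∈ Ioo p q, IsLocalMax g t := by
  apply my_core hg hpq
  · have := (my_deriv_pos_right (hgd p) h1).and
      (Ioo_mem_nhdsGT_of_mem (show p ∈ Ico p q from ⟨le_refl p, hpq⟩))
    rcases this.exists with ⟨t, ht1, ht2⟩
    exact ⟨t, ht2, ht1⟩
  · have := (my_deriv_neg_left (hgd q) h2).and
      (Ioo_mem_nhdsLT_of_mem (show q ∈ Ioc p q from ⟨hpq, le_refl q⟩))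
    rcases this.exists with ⟨t, ht1, ht2⟩
    exact ⟨t, ht2, ht1⟩

/-- Between two strict punctured local minima there is a local maximum. -/
lemma my_max_between {f : ℝ → ℝ} (hf : Continuous f) {p q : ℝ} (hpq : p < q)
    (h1 : ∀ᶠ t in 𝓝[≠] p, f p < f t) (h2 : ∀ᶠ t in 𝓝[≠] q, f q < f t) :
    ∃ t ∈ Ioo p q, IsLocalMax f t := by
  apply my_core hf hpq
  · have h1' : ∀ᶠ t in 𝓝[>] p, f p < f t :=
      h1.filter_mono (nhdsWithin_mono p fun x hx => ne_of_gt hx)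
    have := h1'.and (Ioo_mem_nhdsGT_of_mem (show p ∈ Ico p q from ⟨le_refl p, hpq⟩))
    rcases this.exists with ⟨t, ht1, ht2⟩
    exact ⟨t, ht2, ht1⟩
  · have h2' : ∀ᶠ t in 𝓝[<] q, f q < f t :=
      h2.filter_mono (nhdsWithin_mono q fun x hx => ne_of_lt hx)
    have := h2'.and (Ioo_mem_nhdsLT_of_mem (show q ∈ Ioc p q from ⟨hpq, le_refl q⟩))
    rcases this.exists with ⟨t, ht1, ht2⟩
    exact ⟨t, ht2, ht1⟩

/-- Between two strict punctured local maxima there is a local minimum. -/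
lemma my_min_between {f : ℝ → ℝ} (hf : Continuous f) {p q : ℝ} (hpq : p < q)
    (h1 : ∀ᶠ t in 𝓝[≠] p, f t < f p) (h2 : ∀ᶠ t in 𝓝[≠] q, f t < f q) :
    ∃ t ∈ Ioo p q, IsLocalMin f t := by
  have h1' : ∀ᶠ t in 𝓝[≠] p, (fun x => -f x) p < (fun x => -f x) t := by
    filter_upwards [h1] with t ht; simpa using ht
  have h2' : ∀ᶠ t in 𝓝[≠] q, (fun x => -f x) q < (fun x => -f x) t := by
    filter_upwards [h2] with t ht; simpa using ht
  obtain ⟨t, ht, htmax⟩ := my_max_between hf.neg hpq h1' h2'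
  refine ⟨t, ht, ?_⟩
  have := htmax.neg
  simpa using this

lemma my_localMax_shift_down {g : ℝ → ℝ} {L : ℝ} (hper : ∀ t, g (t + L) = g t) {x : ℝ}
    (h : IsLocalMax g x) : IsLocalMax g (x - L) := by
  have hc : Tendsto (fun y : ℝ => y + L) (𝓝 (x - L)) (𝓝 x) := by
    have := (continuous_add_right L).tendsto (x - L)
    simpa using this
  have h' := hc.eventually h
  filter_upwards [h'] with y hy
  rw [hper y] at hy
  rwa [show g x = g (x - L) from by rw [← hper (x - L), sub_add_cancel]] at hy

/-- Abstract assembly lemma: from `n` "endpoint" points in `[0,L)` satisfying a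
shift-invariant predicate `E`, such that between any two `E`-points there is a local
max of `g`, produce `n` distinct local maxima of `g` in `[0,L)`. -/
lemma my_assem (g : ℝ → ℝ) (L : ℝ) (hL : 0 < L) (hgper : ∀ t, g (t + L) = g t)
    (n : ℕ) (E : ℝ → Prop) (hEshift : ∀ x, E x → E (x + L))
    (key : ∀ x y, x < y → E x → E y → ∃ t ∈ Ioo x y, IsLocalMax g t)
    (s : Fin n → ℝ) (hs : Function.Injective s)
    (hsp : ∀ i, s i ∈ Ico 0 L ∧ E (s i)) :
    ∃ u : Fin n → ℝ, Function.Injective u ∧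
      ∀ i, u i ∈ Ico 0 L ∧ IsLocalMax g (u i) := by
  rcases Nat.eq_zero_or_pos n with rfl | hn
  · exact ⟨fun i => 0, fun a => a.elim0, fun i => i.elim0⟩
  -- sort the points
  set T : Finset ℝ := Finset.image s Finset.univ with hT
  have hTcard : T.card = n := by
    rw [hT, Finset.card_image_of_injective _ hs, Finset.card_univ, Fintype.card_fin]
  set p : Fin n → ℝ := fun i => T.orderEmbOfFin hTcard i with hp
  have hpmono : StrictMono p := (T.orderEmbOfFin hTcard).strictMono
  have hpprop : ∀ i, p i ∈ Ico 0 L ∧ E (p i) := by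
    intro i
    have : p i ∈ T := Finset.orderEmbOfFin_mem T hTcard i
    rw [hT, Finset.mem_image] at this
    obtain ⟨j, _, hj⟩ := this
    rw [← hj]; exact hsp j
  set i0 : Fin n := ⟨0, hn⟩ with hi0
  have hp0 : ∀ i, p i0 ≤ p i := fun i => hpmono.monotone (Fin.mk_le_of_le_val (Nat.zero_le _))
  -- right endpoints
  set R : Fin n → ℝ := fun i =>
    if h : (i : ℕ) + 1 < n then p ⟨(i : ℕ) + 1, h⟩ else p i0 + L with hR
  have hRlt : ∀ i, p i < R i := by
    intro i
    simp only [hR]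
    by_cases h : (i : ℕ) + 1 < n
    · rw [dif_pos h]; exact hpmono (by simp [Fin.lt_def])
    · rw [dif_neg h]
      calc p i < L := (hpprop i).1.2
        _ ≤ p i0 + L := le_add_of_nonneg_left (hpprop i0).1.1
  have hRE : ∀ i, E (R i) := by
    intro i
    simp only [hR]
    by_cases h : (i : ℕ) + 1 < n
    · rw [dif_pos h]; exact (hpprop _).2
    · rw [dif_neg h]; exact hEshift _ (hpprop i0).2
  have hRle : ∀ i, R i ≤ p i0 + L := by
    intro i
    simp only [hR]
    by_cases h : (i : ℕ) + 1 < n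
    · rw [dif_pos h]
      have h1 : p ⟨(i:ℕ)+1, h⟩ < L := (hpprop _).1.2
      have h2 : (0:ℝ) ≤ p i0 := (hpprop i0).1.1
      linarith
    · rw [dif_neg h]
  have hRp : ∀ i j : Fin n, (i : ℕ) < (j : ℕ) → R i ≤ p j := by
    intro i j hij
    have h : (i : ℕ) + 1 < n := lt_of_le_of_lt (Nat.succ_le_of_lt hij) j.isLt
    simp only [hR]
    rw [dif_pos h]
    exact hpmono.monotone (by simp [Fin.le_def]; omega)
  -- the local maxima
  have hex : ∀ i, ∃ t ∈ Ioo (p i) (R i), IsLocalMax g t :=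
    fun i => key _ _ (hRlt i) (hpprop i).2 (hRE i)
  choose t ht htmax using hex
  have htmono : StrictMono t := by
    intro i j hij
    calc t i < R i := (ht i).2
      _ ≤ p j := hRp i j hij
      _ < t j := (ht j).1
  have htlow : ∀ i, p i0 < t i := fun i => lt_of_le_of_lt (hp0 i) (ht i).1
  have hthigh : ∀ i, t i < p i0 + L := fun i => lt_of_lt_of_le (ht i).2 (hRle i)
  -- reduce mod L
  set u : Fin n → ℝ := fun i => if t i < L then t i else t i - L with hu
  have hu1 : ∀ i, u i ∈ Ico 0 L := by
    intro i
    simp only [hu]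
    by_cases h : t i < L
    · rw [if_pos h]
      exact ⟨le_of_lt (lt_of_le_of_lt (hpprop i0).1.1 (htlow i)), h⟩
    · rw [if_neg h]
      push_neg at h
      constructor
      · linarith
      · have := hthigh i
        have := (hpprop i0).1.2
        linarith
  have hu2 : ∀ i, IsLocalMax g (u i) := by
    intro i
    simp only [hu]
    by_cases h : t i < L
    · rw [if_pos h]; exact htmax i
    · rw [if_neg h]; exact my_localMax_shift_down hgper (htmax i)
  have hsep : ∀ i, ¬ t i < L → u i < p i0 := by
    intro i h
    simp only [hu]
    rw [if_neg h]
    have := hthigh i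
    linarith
  have hsep2 : ∀ i, t i < L → p i0 < u i := by
    intro i h
    simp only [hu]
    rw [if_pos h]
    exact htlow i
  refine ⟨u, ?_, fun i => ⟨hu1 i, hu2 i⟩⟩
  intro i j hij
  simp only [hu] at hij
  by_cases hi : t i < L <;> by_cases hj : t j < L
  · apply htmono.injective
    rwa [if_pos hi, if_pos hj] at hij
  · exfalso
    rw [if_pos hi, if_neg hj] at hij
    have h1 := htlow i
    have h2 := hthigh j
    have h3 := hp0 i
    linarith
  · exfalso
    rw [if_neg hi, if_pos hj] at hij
    have h1 := htlow j
    have h2 := hthigh i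
    linarith
  · apply htmono.injective
    rw [if_neg hi, if_neg hj] at hij
    linarith

/-- For a smooth periodic function with only non-degenerate critical points having at
least `n` local maxima and `n` local minima in one period, for every `a ≠ 0` the
function `g_a(t) = f(t) + a f'(t)` has at least `n` local maxima (in one period). -/
theorem stmt0 (f : ℝ → ℝ) (L : ℝ) (n : ℕ)
    (hf : ContDiff ℝ (⊤ : ℕ∞) f) (hL : 0 < L) (hper : ∀ t, f (t + L) = f t)
    (hnd : ∀ t, deriv f t = 0 → deriv (deriv f) t ≠ 0)
    (hmax : ∃ s : Fin n → ℝ, Function.Injective s ∧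
      ∀ i, s i ∈ Set.Ico 0 L ∧ IsLocalMax f (s i))
    (hmin : ∃ s : Fin n → ℝ, Function.Injective s ∧
      ∀ i, s i ∈ Set.Ico 0 L ∧ IsLocalMin f (s i)) :
    ∀ a : ℝ, a ≠ 0 → ∃ s : Fin n → ℝ, Function.Injective s ∧
      ∀ i, s i ∈ Set.Ico 0 L ∧ IsLocalMax (fun t => f t + a * deriv f t) (s i) := by
  intro a ha
  have hf' : ContDiff ℝ (∞ : WithTop ℕ∞) f := hf.of_le (by simp)
  have hfd : Differentiable ℝ f := hf'.differentiable (by simp)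
  have hF1 : ContDiff ℝ (∞ : WithTop ℕ∞) (deriv f) := (contDiff_infty_iff_deriv.1 hf').2
  have hF1d : Differentiable ℝ (deriv f) := hF1.differentiable (by simp)
  have hfc : Continuous f := hfd.continuous
  have hF1c : Continuous (deriv f) := hF1d.continuous
  have hfeq : (fun x => f (x + L)) = f := funext hper
  have hper1 : ∀ t, deriv f (t + L) = deriv f t := by
    intro t
    calc deriv f (t + L) = deriv (fun x => f (x + L)) t := (deriv_comp_add_const _ _ _).symm
      _ = deriv f t := by rw [hfeq]
  have hfeq1 : (fun x => deriv f (x + L)) = deriv f := funext hper1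
  have hper2 : ∀ t, deriv (deriv f) (t + L) = deriv (deriv f) t := by
    intro t
    calc deriv (deriv f) (t + L) = deriv (fun x => deriv f (x + L)) t :=
          (deriv_comp_add_const _ _ _).symm
      _ = deriv (deriv f) t := by rw [hfeq1]
  set g := fun t => f t + a * deriv f t with hg
  have hgper : ∀ t, g (t + L) = g t := by
    intro t; simp only [hg, hper t, hper1 t]
  have hgc : Continuous g := hfc.add (continuous_const.mul hF1c)
  have hgd : Differentiable ℝ g := hfd.add (hF1d.const_mul a)
  have hderivg : ∀ t, deriv g t = deriv f t + a * deriv (deriv f) t := by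
    intro t
    rw [hg]
    rw [deriv_fun_add (hfd t) ((hF1d t).const_mul a), deriv_const_mul a (hF1d t)]
  have hmax2 : ∀ q, IsLocalMax f q → deriv f q = 0 ∧ deriv (deriv f) q < 0 := by
    intro q hq
    have h1 : deriv f q = 0 := hq.deriv_eq_zero
    refine ⟨h1, ?_⟩
    rcases lt_or_gt_of_ne (hnd q h1) with h | h
    · exact h
    · exfalso
      have hstrict := my_strict_min hfc hfd (hF1d q) h1 h
      have h2 : ∀ᶠ t in 𝓝[≠] q, f t ≤ f q := hq.filter_mono nhdsWithin_le_nhds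
      rcases (hstrict.and h2).exists with ⟨t, ht1, ht2⟩
      linarith
  have hmin2 : ∀ q, IsLocalMin f q → deriv f q = 0 ∧ 0 < deriv (deriv f) q := by
    intro q hq
    have h1 : deriv f q = 0 := hq.deriv_eq_zero
    refine ⟨h1, ?_⟩
    rcases lt_or_gt_of_ne (hnd q h1) with h | h
    · exfalso
      have hstrict := my_strict_max hfc hfd (hF1d q) h1 h
      have h2 : ∀ᶠ t in 𝓝[≠] q, f q ≤ f t := hq.filter_mono nhdsWithin_le_nhds
      rcases (hstrict.and h2).exists with ⟨t, ht1, ht2⟩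
      linarith
    · exact h
  rcases lt_or_gt_of_ne ha with hneg | hpos
  · -- a < 0 : use local maxima as endpoints
    obtain ⟨s, hsinj, hsp⟩ := hmax
    apply my_assem g L hL hgper n (fun x => deriv f x = 0 ∧ deriv (deriv f) x < 0)
      ?_ ?_ s hsinj ?_
    · rintro x ⟨h1, h2⟩
      exact ⟨by rw [hper1 x]; exact h1, by rw [hper2 x]; exact h2⟩
    · rintro x y hxy ⟨hx1, hx2⟩ ⟨hy1, hy2⟩
      have hxs := my_strict_max hfc hfd (hF1d x) hx1 hx2
      have hys := my_strict_max hfc hfd (hF1d y) hy1 hy2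
      obtain ⟨r, hr, hrmin⟩ := my_min_between hfc hxy hxs hys
      obtain ⟨hr1, hr2⟩ := hmin2 r hrmin
      have hgx : 0 < deriv g x := by
        rw [hderivg x, hx1]; nlinarith
      have hgr : deriv g r < 0 := by
        rw [hderivg r, hr1]; nlinarith
      obtain ⟨t, ht, htmax⟩ := my_main hgc hgd hr.1 hgx hgr
      exact ⟨t, ⟨ht.1, lt_trans ht.2 hr.2⟩, htmax⟩
    · intro i
      refine ⟨(hsp i).1, ?_⟩
      exact hmax2 _ (hsp i).2
  · -- a > 0 : use local minima as endpoints
    obtain ⟨s, hsinj, hsp⟩ := hmin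
    apply my_assem g L hL hgper n (fun x => deriv f x = 0 ∧ 0 < deriv (deriv f) x)
      ?_ ?_ s hsinj ?_
    · rintro x ⟨h1, h2⟩
      exact ⟨by rw [hper1 x]; exact h1, by rw [hper2 x]; exact h2⟩
    · rintro x y hxy ⟨hx1, hx2⟩ ⟨hy1, hy2⟩
      have hxs := my_strict_min hfc hfd (hF1d x) hx1 hx2
      have hys := my_strict_min hfc hfd (hF1d y) hy1 hy2
      obtain ⟨r, hr, hrmax⟩ := my_max_between hfc hxy hxs hys
      obtain ⟨hr1, hr2⟩ := hmax2 r hrmax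
      have hgx : 0 < deriv g x := by
        rw [hderivg x, hx1]; nlinarith
      have hgr : deriv g r < 0 := by
        rw [hderivg r, hr1]; nlinarith
      obtain ⟨t, ht, htmax⟩ := my_main hgc hgd hr.1 hgx hgr
      exact ⟨t, ⟨ht.1, lt_trans ht.2 hr.2⟩, htmax⟩
    · intro i
      refine ⟨(hsp i).1, ?_⟩
      exact hmin2 _ (hsp i).2
end

section
/- Let f : ℝ → ℝ be smooth and periodic with at least 2n local extrema, all critical points non-degenerate. Then for all reals a ≠ b with a, b outside a set of measure zero, the function t ↦ f(t) + (a+b) f'(t) + ab f''(t) has at least n local maxima. -/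
open MeasureTheory Set Filter Topology
open scoped ContDiff

namespace Stmt3Aux

/-- Alternating sign pattern of `u` at `2m+1` points spanning one period. -/
def AltSign (L : ℝ) (m : ℕ) (u : ℝ → ℝ) : Prop :=
  ∃ x : ℕ → ℝ, (∀ i j, i < j → j ≤ 2 * m → x i < x j) ∧ x (2 * m) = x 0 + L ∧
    ∀ i ≤ 2 * m, 0 < (-1 : ℝ) ^ i * u (x i)

lemma chain_lt {x : ℕ → ℝ} {m : ℕ} (h : ∀ k, k < m → x k < x (k + 1)) :
    ∀ i j, i < j → j ≤ m → x i < x j := by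
  intro i j hij hjm
  induction j with
  | zero => omega
  | succ j ih =>
    rcases Nat.lt_succ_iff_lt_or_eq.mp hij with h' | h'
    · exact (ih h' (by omega)).trans (h j (by omega))
    · subst h'; exact h i (by omega)

lemma neg_one_pow_even {k : ℕ} (h : k % 2 = 0) : (-1 : ℝ) ^ k = 1 :=
  Even.neg_one_pow (Nat.even_iff.mpr h)

lemma neg_one_pow_odd {k : ℕ} (h : k % 2 = 1) : (-1 : ℝ) ^ k = -1 :=
  Odd.neg_one_pow (Nat.odd_iff.mpr h)

lemma deriv_periodic {f : ℝ → ℝ} {L : ℝ} (hper : ∀ t, f (t + L) = f t) :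
    ∀ t, deriv f (t + L) = deriv f t := by
  intro t
  have h1 : (fun x => f (x + L)) = f := funext hper
  calc deriv f (t + L) = deriv (fun x => f (x + L)) t := (deriv_comp_add_const _ _ _).symm
    _ = deriv f t := by rw [h1]

lemma periodic_int_mul {g : ℝ → ℝ} {L : ℝ} (hper : ∀ t, g (t + L) = g t) (k : ℤ) :
    ∀ t, g (t + L * k) = g t := by
  have key : ∀ m : ℕ, ∀ t, g (t + L * m) = g t := by
    intro m
    induction m with
    | zero => intro t; simp
    | succ m ih =>
      intro t
      have e : t + L * ((m : ℝ) + 1) = (t + L) + L * m := by ring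
      push_cast
      rw [e, ih, hper]
  intro t
  rcases le_or_gt 0 k with hk | hk
  · lift k to ℕ using hk
    rw [Int.cast_natCast]; exact key _ t
  · set m := (-k).toNat with hm
    have em : ((m : ℕ) : ℝ) = -(k : ℝ) := by
      have h0 : ((m : ℕ) : ℤ) = -k := Int.toNat_of_nonneg (by omega)
      exact_mod_cast congrArg (fun z : ℤ => (z : ℝ)) h0
    have h1 := key m (t + L * k)
    have e2 : t + L * (k : ℝ) + L * (m : ℝ) = t := by rw [em]; ring
    rw [e2] at h1
    exact h1.symm

lemma isLocalMax_shift {g : ℝ → ℝ} {c ξ : ℝ} (hper : ∀ t, g (t + c) = g t)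
    (h : IsLocalMax g ξ) : IsLocalMax g (ξ - c) := by
  have ht : Filter.Tendsto (fun t : ℝ => t + c) (𝓝 (ξ - c)) (𝓝 ξ) :=
    (continuous_add_right c).tendsto' _ _ (by ring)
  have h2 : ∀ᶠ t in 𝓝 (ξ - c), g (t + c) ≤ g ξ := ht.eventually h
  have e : g ξ = g (ξ - c) := by
    have := hper (ξ - c); rwa [show ξ - c + c = ξ from by ring] at this
  filter_upwards [h2] with t htt
  rw [hper t] at htt
  rw [← e]; exact htt

lemma sub_floor_mem_Ico {L t : ℝ} (hL : 0 < L) : t - L * ⌊t / L⌋ ∈ Set.Ico (0 : ℝ) L := by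
  have hdiv : L * (t / L) = t := by field_simp
  constructor
  · have h1 : (⌊t / L⌋ : ℝ) ≤ t / L := Int.floor_le _
    nlinarith
  · have h2 : t / L < ⌊t / L⌋ + 1 := Int.lt_floor_add_one _
    nlinarith

lemma fract_eq_inj {L a b : ℝ} (hL : 0 < L) (hab : |a - b| < L)
    (h : a - L * ⌊a / L⌋ = b - L * ⌊b / L⌋) : a = b := by
  have h1 : a - b = L * (((⌊a / L⌋ - ⌊b / L⌋ : ℤ)) : ℝ) := by push_cast; linarith
  have h2 : |(((⌊a / L⌋ - ⌊b / L⌋ : ℤ)) : ℝ)| < 1 := by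
    rw [h1, abs_mul, abs_of_pos hL] at hab
    nlinarith [abs_nonneg (((⌊a / L⌋ - ⌊b / L⌋ : ℤ)) : ℝ)]
  have h3 : ⌊a / L⌋ - ⌊b / L⌋ = 0 := by
    rw [← Int.cast_abs] at h2
    have h4 : |⌊a / L⌋ - ⌊b / L⌋| < 1 := by exact_mod_cast h2
    have h5 := abs_lt.mp h4
    omega
  rw [h3] at h1
  push_cast at h1
  linarith

lemma exists_gt_of_deriv_pos {g : ℝ → ℝ} {p q : ℝ} (hg : DifferentiableAt ℝ g p)
    (hd : 0 < deriv g p) (hpq : p < q) : ∃ t ∈ Set.Ioc p q, g p < g t := by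
  have hs := hasDerivAt_iff_tendsto_slope.mp hg.hasDerivAt
  have h1 : ∀ᶠ t in 𝓝[≠] p, 0 < slope g p t := hs.eventually (eventually_gt_nhds hd)
  have h2 : ∀ᶠ t in 𝓝[>] p, 0 < slope g p t :=
    h1.filter_mono (nhdsWithin_mono p fun t ht => ne_of_gt ht)
  have h3 : Set.Ioc p q ∈ 𝓝[>] p := Ioc_mem_nhdsGT_of_mem ⟨le_rfl, hpq⟩
  obtain ⟨t, h4, h5⟩ := (h2.and (Filter.eventually_of_mem h3 fun t ht => ht)).exists
  refine ⟨t, h5, ?_⟩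
  have hpd : (0 : ℝ) < t - p := sub_pos.mpr h5.1
  have h6 := mul_pos h4 hpd
  rw [slope_def_field, div_mul_cancel₀ _ (ne_of_gt hpd)] at h6
  linarith

lemma exists_gt_of_deriv_neg {g : ℝ → ℝ} {p q : ℝ} (hg : DifferentiableAt ℝ g q)
    (hd : deriv g q < 0) (hpq : p < q) : ∃ t ∈ Set.Ico p q, g q < g t := by
  have hs := hasDerivAt_iff_tendsto_slope.mp hg.hasDerivAt
  have h1 : ∀ᶠ t in 𝓝[≠] q, slope g q t < 0 := hs.eventually (eventually_lt_nhds hd)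
  have h2 : ∀ᶠ t in 𝓝[<] q, slope g q t < 0 :=
    h1.filter_mono (nhdsWithin_mono q fun t ht => ne_of_lt ht)
  have h3 : Set.Ico p q ∈ 𝓝[<] q := Ico_mem_nhdsLT_of_mem ⟨hpq, le_rfl⟩
  obtain ⟨t, h4, h5⟩ := (h2.and (Filter.eventually_of_mem h3 fun t ht => ht)).exists
  refine ⟨t, h5, ?_⟩
  have hpd : t - q < 0 := sub_neg.mpr h5.2
  have h6 := mul_pos_of_neg_of_neg h4 hpd
  rw [slope_def_field, div_mul_cancel₀ _ (ne_of_lt hpd)] at h6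
  linarith

lemma max_sign {f : ℝ → ℝ} (hf : ContDiff ℝ ∞ f) {M : ℝ}
    (hM : IsLocalMax f M) (hnd : deriv (deriv f) M ≠ 0) :
    ∃ δ > 0, (∀ p, M - δ < p → p < M → 0 < deriv f p) ∧
      ∀ q, M < q → q < M + δ → deriv f q < 0 := by
  have hf1 : ContDiff ℝ ∞ (deriv f) := (contDiff_infty_iff_deriv.mp hf).2
  have hf1c : Continuous (deriv f) := hf1.continuous
  have hf2c : Continuous (deriv (deriv f)) := (contDiff_infty_iff_deriv.mp hf1).2.continuous
  have hM0 : deriv f M = 0 := hM.deriv_eq_zero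
  rcases hnd.lt_or_gt with hneg | hpos
  · have hev : {t : ℝ | deriv (deriv f) t < 0} ∈ 𝓝 M :=
      hf2c.continuousAt.preimage_mem_nhds (Iio_mem_nhds hneg)
    obtain ⟨s, hsub, hsopen, hsM⟩ := mem_nhds_iff.mp hev
    obtain ⟨δ, hδ, hball⟩ := Metric.isOpen_iff.mp hsopen M hsM
    have hanti : StrictAntiOn (deriv f) (Metric.ball M δ) :=
      strictAntiOn_of_deriv_neg (convex_ball M δ) hf1c.continuousOn
        (fun t ht => hsub (hball (by rwa [Metric.isOpen_ball.interior_eq] at ht)))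
    have hMb : M ∈ Metric.ball M δ := Metric.mem_ball_self hδ
    refine ⟨δ, hδ, ?_, ?_⟩
    · intro p h1 h2
      have hpb : p ∈ Metric.ball M δ := by
        rw [Real.ball_eq_Ioo]; exact ⟨h1, by linarith⟩
      have := hanti hpb hMb h2
      rw [hM0] at this; linarith
    · intro q h1 h2
      have hqb : q ∈ Metric.ball M δ := by
        rw [Real.ball_eq_Ioo]; exact ⟨by linarith, h2⟩
      have := hanti hMb hqb h1
      rw [hM0] at this; linarith
  · exfalso
    have hev : {t : ℝ | 0 < deriv (deriv f) t} ∈ 𝓝 M :=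
      hf2c.continuousAt.preimage_mem_nhds (Ioi_mem_nhds hpos)
    obtain ⟨s, hsub, hsopen, hsM⟩ := mem_nhds_iff.mp hev
    obtain ⟨δ, hδ, hball⟩ := Metric.isOpen_iff.mp hsopen M hsM
    have hmono : StrictMonoOn (deriv f) (Metric.ball M δ) :=
      strictMonoOn_of_deriv_pos (convex_ball M δ) hf1c.continuousOn
        (fun t ht => hsub (hball (by rwa [Metric.isOpen_ball.interior_eq] at ht)))
    have hMb : M ∈ Metric.ball M δ := Metric.mem_ball_self hδ
    have hpos' : ∀ q, M < q → q < M + δ → 0 < deriv f q := by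
      intro q h1 h2
      have hqb : q ∈ Metric.ball M δ := by
        rw [Real.ball_eq_Ioo]; exact ⟨by linarith, h2⟩
      have := hmono hMb hqb h1
      rw [hM0] at this; linarith
    have hmono2 : StrictMonoOn f (Set.Ico M (M + δ)) :=
      strictMonoOn_of_deriv_pos (convex_Ico _ _) hf.continuous.continuousOn
        (fun t ht => by
          rw [interior_Ico] at ht
          exact hpos' t ht.1 ht.2)
    have hM' : ∀ᶠ x in 𝓝 M, f x ≤ f M := hM
    obtain ⟨ε, hε, hloc⟩ := Metric.eventually_nhds_iff.mp hM'
    set t := M + min (δ / 2) (ε / 2) with htdef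
    have hmin : 0 < min (δ / 2) (ε / 2) := lt_min (by linarith) (by linarith)
    have ht1 : M < t := by rw [htdef]; linarith
    have ht2 : t < M + δ := by
      have : min (δ / 2) (ε / 2) ≤ δ / 2 := min_le_left _ _
      rw [htdef]; linarith
    have hlt : f M < f t :=
      hmono2 ⟨le_rfl, by linarith⟩ ⟨ht1.le, ht2⟩ ht1
    have hle : f t ≤ f M := by
      apply hloc
      rw [Real.dist_eq, htdef]
      have : min (δ / 2) (ε / 2) ≤ ε / 2 := min_le_right _ _
      rw [abs_of_pos (by linarith : (0:ℝ) < M + min (δ / 2) (ε / 2) - M)]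
      linarith
    linarith

lemma altsign_base {f : ℝ → ℝ} {L : ℝ} {n : ℕ} (hn : 0 < n)
    (hf : ContDiff ℝ ∞ f) (hL : 0 < L)
    (hper : ∀ t, f (t + L) = f t)
    (hnd : ∀ t, deriv f t = 0 → deriv (deriv f) t ≠ 0)
    (hmax : ∃ s : Fin n → ℝ, Function.Injective s ∧
      ∀ i, s i ∈ Set.Ico 0 L ∧ IsLocalMax f (s i)) :
    AltSign L n (deriv f) := by
  obtain ⟨s, hinj, hs⟩ := hmax
  have hne0 : Nonempty (Fin n) := ⟨⟨0, hn⟩⟩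
  set T : Finset ℝ := Finset.image s Finset.univ with hT
  have hcard : T.card = n := by
    rw [hT, Finset.card_image_of_injective _ hinj, Finset.card_univ, Fintype.card_fin]
  set M : Fin n → ℝ := fun i => (T.orderIsoOfFin hcard i : ℝ) with hMdef
  have hMmono : StrictMono M := fun i j hij =>
    Subtype.coe_lt_coe.mpr ((T.orderIsoOfFin hcard).strictMono hij)
  have hMprop : ∀ i, M i ∈ Set.Ico 0 L ∧ IsLocalMax f (M i) := by
    intro i
    have hmem : M i ∈ T := (T.orderIsoOfFin hcard i).2
    rw [hT, Finset.mem_image] at hmem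
    obtain ⟨j, _, hj⟩ := hmem
    rw [← hj]; exact hs j
  have hδex : ∀ i : Fin n, ∃ δ > 0, (∀ p, M i - δ < p → p < M i → 0 < deriv f p) ∧
      ∀ q, M i < q → q < M i + δ → deriv f q < 0 := fun i =>
    max_sign hf (hMprop i).2 (hnd _ (hMprop i).2.deriv_eq_zero)
  choose δ hδpos hδleft hδright using hδex
  have hne : (Finset.univ : Finset (Fin n)).Nonempty := Finset.univ_nonempty
  have hne2 : (Finset.univ : Finset (Fin n × Fin n)).Nonempty := Finset.univ_nonempty
  set ε₁ := Finset.univ.inf' hne δ with hε₁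
  set A : Fin n × Fin n → ℝ := fun p => if M p.1 < M p.2 then M p.2 - M p.1 else L with hA
  set ε₂ := Finset.univ.inf' hne2 A with hε₂
  set B : Fin n × Fin n → ℝ := fun p => L - (M p.1 - M p.2) with hB
  set ε₃ := Finset.univ.inf' hne2 B with hε₃
  have hε₁pos : 0 < ε₁ := by
    rw [hε₁, Finset.lt_inf'_iff]; exact fun i _ => hδpos i
  have hε₂pos : 0 < ε₂ := by
    rw [hε₂, Finset.lt_inf'_iff]
    intro p _
    rw [hA]
    dsimp only
    split_ifs with h
    · linarith
    · exact hL
  have hε₃pos : 0 < ε₃ := by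
    rw [hε₃, Finset.lt_inf'_iff]
    intro p _
    have h1 := (hMprop p.1).1.2
    have h2 := (hMprop p.2).1.1
    rw [hB]; dsimp only; linarith
  set ε := min ε₁ (min ε₂ ε₃) / 3 with hε
  have hεpos : 0 < ε := by
    rw [hε]
    have := lt_min hε₁pos (lt_min hε₂pos hε₃pos)
    linarith
  have hεδ : ∀ i, ε < δ i := by
    intro i
    have h1 := Finset.inf'_le δ (Finset.mem_univ i)
    have h2 : ε ≤ ε₁ / 3 := by
      rw [hε]
      have := min_le_left ε₁ (min ε₂ ε₃)
      linarith
    linarith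
  have hgap : ∀ i j : Fin n, i < j → 2 * ε < M j - M i := by
    intro i j hij
    have h1 : ε₂ ≤ M j - M i := by
      have h0 := Finset.inf'_le A (Finset.mem_univ (i, j))
      rw [hA] at h0
      simp only [if_pos (hMmono hij)] at h0
      exact h0
    have h2 : ε ≤ ε₂ / 3 := by
      rw [hε]
      have h3 := min_le_right ε₁ (min ε₂ ε₃)
      have h4 := min_le_left ε₂ ε₃
      linarith
    linarith
  have hwrap : ∀ i j : Fin n, 2 * ε < L - (M i - M j) := by
    intro i j
    have h1 : ε₃ ≤ L - (M i - M j) := Finset.inf'_le B (Finset.mem_univ (i, j))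
    have h2 : ε ≤ ε₃ / 3 := by
      rw [hε]
      have h3 := min_le_right ε₁ (min ε₂ ε₃)
      have h4 := min_le_right ε₂ ε₃
      linarith
    linarith
  -- ℕ-indexed midpoints
  set N : ℕ → ℝ := fun j => M ⟨j % n, Nat.mod_lt _ hn⟩ with hN
  have hNsign : ∀ j, 0 < deriv f (N j - ε) ∧ deriv f (N j + ε) < 0 := by
    intro j
    constructor
    · exact hδleft _ _ (by linarith [hεδ (⟨j % n, Nat.mod_lt _ hn⟩ : Fin n)]) (by linarith)
    · exact hδright _ _ (by linarith) (by linarith [hεδ (⟨j % n, Nat.mod_lt _ hn⟩ : Fin n)])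
  have hNgap : ∀ j j', j < j' → j' < n → 2 * ε < N j' - N j := by
    intro j j' h1 h2
    apply hgap
    rw [Fin.mk_lt_mk, Nat.mod_eq_of_lt (by omega), Nat.mod_eq_of_lt h2]
    exact h1
  have hNwrap : ∀ j j', 2 * ε < L - (N j - N j') := fun j j' => hwrap _ _
  refine ⟨fun k => if k < 2 * n then
      (if k % 2 = 0 then N (k / 2) - ε else N (k / 2) + ε) else N 0 - ε + L, ?_, ?_, ?_⟩
  · apply chain_lt
    intro k hk
    beta_reduce
    rw [if_pos hk]
    by_cases h2 : k % 2 = 0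
    · have hk1 : k + 1 < 2 * n := by omega
      rw [if_pos hk1, if_pos h2, if_neg (by omega)]
      have e : (k + 1) / 2 = k / 2 := by omega
      rw [e]
      linarith
    · rw [if_neg h2]
      by_cases hk1 : k + 1 < 2 * n
      · rw [if_pos hk1, if_pos (by omega)]
        have e : (k + 1) / 2 = k / 2 + 1 := by omega
        rw [e]
        have := hNgap (k / 2) (k / 2 + 1) (by omega) (by omega)
        linarith
      · rw [if_neg hk1]
        have := hNwrap (k / 2) 0
        linarith
  · have e0 : (0 : ℕ) / 2 = 0 := by norm_num
    beta_reduce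
    rw [if_neg (by omega), if_pos (by omega), if_pos (by norm_num), e0]
  · intro i hi
    by_cases h2 : i < 2 * n
    · beta_reduce
      rw [if_pos h2]
      by_cases h3 : i % 2 = 0
      · rw [if_pos h3, neg_one_pow_even h3, one_mul]
        exact (hNsign (i / 2)).1
      · rw [if_neg h3, neg_one_pow_odd (by omega)]
        have := (hNsign (i / 2)).2
        linarith
    · beta_reduce
      rw [if_neg h2, neg_one_pow_even (by omega), one_mul]
      have hp := deriv_periodic hper (N 0 - ε)
      rw [hp]
      exact (hNsign 0).1

lemma altsign_step {u : ℝ → ℝ} {L b : ℝ} {m : ℕ} (hm : 0 < m) (hL : 0 < L)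
    (hu : Differentiable ℝ u) (huper : ∀ t, u (t + L) = u t)
    (h : AltSign L m u) : AltSign L m fun t => u t + b * deriv u t := by
  obtain ⟨x, hx, hxL, hsig⟩ := h
  have hucont : Continuous u := hu.continuous
  have hu'per : ∀ t, deriv u (t + L) = deriv u t := deriv_periodic huper
  have hwex : ∀ i, ∃ w, 1 ≤ i → i ≤ 2 * m → x (i - 1) < w ∧ w < x i ∧ u w = 0 := by
    intro i
    by_cases hi : 1 ≤ i ∧ i ≤ 2 * m
    · obtain ⟨hi1, hi2⟩ := hi
      have hlt : x (i - 1) < x i := hx _ _ (by omega) hi2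
      by_cases hpar : i % 2 = 0
      · have s1 : 0 < (-1 : ℝ) ^ (i - 1) * u (x (i - 1)) := hsig _ (by omega)
        have s2 : 0 < (-1 : ℝ) ^ i * u (x i) := hsig _ hi2
        rw [neg_one_pow_odd (by omega)] at s1
        rw [neg_one_pow_even hpar, one_mul] at s2
        have hmem : (0 : ℝ) ∈ Set.Ioo (u (x (i - 1))) (u (x i)) := ⟨by linarith, s2⟩
        obtain ⟨w, hwmem, hw0⟩ := intermediate_value_Ioo hlt.le hucont.continuousOn hmem
        exact ⟨w, fun _ _ => ⟨hwmem.1, hwmem.2, hw0⟩⟩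
      · have s1 : 0 < (-1 : ℝ) ^ (i - 1) * u (x (i - 1)) := hsig _ (by omega)
        have s2 : 0 < (-1 : ℝ) ^ i * u (x i) := hsig _ hi2
        rw [neg_one_pow_even (by omega), one_mul] at s1
        rw [neg_one_pow_odd (by omega)] at s2
        have hmem : (0 : ℝ) ∈ Set.Ioo (u (x i)) (u (x (i - 1))) := ⟨by linarith, s1⟩
        obtain ⟨w, hwmem, hw0⟩ := intermediate_value_Ioo' hlt.le hucont.continuousOn hmem
        exact ⟨w, fun _ _ => ⟨hwmem.1, hwmem.2, hw0⟩⟩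
    · exact ⟨0, fun h1 h2 => absurd ⟨h1, h2⟩ hi⟩
  choose w hw using hwex
  have hzex : ∀ i, ∃ z, 1 ≤ i → i ≤ 2 * m →
      w i < z ∧ (i < 2 * m → z < w (i + 1)) ∧ (i = 2 * m → z < w 1 + L) ∧
        deriv u z = 0 ∧ 0 < (-1 : ℝ) ^ i * u z := by
    intro i
    by_cases hi : 1 ≤ i ∧ i ≤ 2 * m
    · obtain ⟨hi1, hi2⟩ := hi
      set W : ℝ := if i = 2 * m then w 1 + L else w (i + 1) with hWdef
      obtain ⟨hwa, hwb, hwz⟩ := hw i hi1 hi2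
      have hWz : u W = 0 ∧ x i < W := by
        rw [hWdef]
        split_ifs with he
        · have hw1 := hw 1 le_rfl (by omega)
          refine ⟨by rw [huper]; exact hw1.2.2, ?_⟩
          have h0 : x 0 < w 1 := hw1.1
          rw [he, hxL]; linarith
        · have h3 := hw (i + 1) (by omega) (by omega)
          have e : i + 1 - 1 = i := by omega
          rw [e] at h3
          exact ⟨h3.2.2, h3.1⟩
      have hxiW : x i ∈ Set.Icc (w i) W := ⟨hwb.le, hWz.2.le⟩
      have hwW : w i < W := lt_trans hwb hWz.2
      by_cases hpar : i % 2 = 0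
      · obtain ⟨z, hzmem, hzmax⟩ := isCompact_Icc.exists_isMaxOn
          (Set.nonempty_Icc.mpr hwW.le) hucont.continuousOn
        have hs : 0 < u (x i) := by
          have := hsig i hi2; rwa [neg_one_pow_even hpar, one_mul] at this
        have hzpos : 0 < u z := lt_of_lt_of_le hs (hzmax hxiW)
        have hz1 : w i < z := lt_of_le_of_ne hzmem.1
          (fun e => absurd hzpos (by rw [← e, hwz]; exact lt_irrefl 0))
        have hz2 : z < W := lt_of_le_of_ne hzmem.2
          (fun e => absurd hzpos (by rw [e, hWz.1]; exact lt_irrefl 0))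
        have hloc : IsLocalMax u z := hzmax.isLocalMax (Icc_mem_nhds hz1 hz2)
        refine ⟨z, fun _ _ => ⟨hz1, ?_, ?_, hloc.deriv_eq_zero, ?_⟩⟩
        · intro hlt
          have e : W = w (i + 1) := by rw [hWdef, if_neg (by omega)]
          rw [← e]; exact hz2
        · intro he
          have e : W = w 1 + L := by rw [hWdef, if_pos he]
          rw [← e]; exact hz2
        · rw [neg_one_pow_even hpar, one_mul]; exact hzpos
      · obtain ⟨z, hzmem, hzmin⟩ := isCompact_Icc.exists_isMinOn
          (Set.nonempty_Icc.mpr hwW.le) hucont.continuousOn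
        have hs : u (x i) < 0 := by
          have := hsig i hi2
          rw [neg_one_pow_odd (by omega)] at this
          linarith
        have hzneg : u z < 0 := lt_of_le_of_lt (hzmin hxiW) hs
        have hz1 : w i < z := lt_of_le_of_ne hzmem.1
          (fun e => absurd hzneg (by rw [← e, hwz]; exact lt_irrefl 0))
        have hz2 : z < W := lt_of_le_of_ne hzmem.2
          (fun e => absurd hzneg (by rw [e, hWz.1]; exact lt_irrefl 0))
        have hloc : IsLocalMin u z := hzmin.isLocalMin (Icc_mem_nhds hz1 hz2)
        refine ⟨z, fun _ _ => ⟨hz1, ?_, ?_, hloc.deriv_eq_zero, ?_⟩⟩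
        · intro hlt
          have e : W = w (i + 1) := by rw [hWdef, if_neg (by omega)]
          rw [← e]; exact hz2
        · intro he
          have e : W = w 1 + L := by rw [hWdef, if_pos he]
          rw [← e]; exact hz2
        · rw [neg_one_pow_odd (by omega)]; linarith
    · exact ⟨0, fun h1 h2 => absurd ⟨h1, h2⟩ hi⟩
  choose z hz using hzex
  refine ⟨fun i => if i = 0 then z (2 * m) - L else z i, ?_, ?_, ?_⟩
  · apply chain_lt
    intro k hk
    beta_reduce
    by_cases hk0 : k = 0
    · subst hk0
      rw [if_pos rfl, if_neg (by omega)]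
      have h1 := hz (2 * m) (by omega) le_rfl
      have h2 := hz 1 le_rfl (by omega)
      have h3 := h1.2.2.1 rfl
      have h4 := h2.1
      linarith
    · rw [if_neg hk0, if_neg (by omega)]
      have h1 := hz k (by omega) (by omega)
      have h2 := hz (k + 1) (by omega) (by omega)
      have h3 := h1.2.1 hk
      linarith [h2.1]
  · beta_reduce
    rw [if_neg (by omega), if_pos rfl]
    ring
  · intro i hi
    beta_reduce
    by_cases hi0 : i = 0
    · subst hi0
      rw [if_pos rfl, pow_zero, one_mul]
      have h1 := hz (2 * m) (by omega) le_rfl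
      have hd0 := h1.2.2.2.1
      have hs0 : 0 < u (z (2 * m)) := by
        have := h1.2.2.2.2
        rwa [neg_one_pow_even (by omega), one_mul] at this
      have e1 : u (z (2 * m) - L) = u (z (2 * m)) := by
        rw [← huper (z (2 * m) - L)]
        congr 1
        ring
      have e2 : deriv u (z (2 * m) - L) = deriv u (z (2 * m)) := by
        rw [← hu'per (z (2 * m) - L)]
        congr 1
        ring
      rw [e1, e2, hd0, mul_zero, add_zero]
      exact hs0
    · rw [if_neg hi0]
      have h1 := hz i (by omega) hi
      rw [h1.2.2.2.1, mul_zero, add_zero]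
      exact h1.2.2.2.2

lemma altsign_extract {g : ℝ → ℝ} {L : ℝ} {n : ℕ} (hL : 0 < L)
    (hg : Differentiable ℝ g) (hgper : ∀ t, g (t + L) = g t)
    (h : AltSign L n (deriv g)) :
    ∃ s : Fin n → ℝ, Function.Injective s ∧ ∀ i, s i ∈ Set.Ico 0 L ∧ IsLocalMax g (s i) := by
  obtain ⟨x, hx, hxL, hsig⟩ := h
  have hξex : ∀ k : Fin n, ∃ ξ, x (2 * (k : ℕ)) < ξ ∧ ξ < x (2 * (k : ℕ) + 1) ∧
      IsLocalMax g ξ := by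
    intro k
    have hkn : (k : ℕ) < n := k.isLt
    have hk2 : 2 * (k : ℕ) + 1 ≤ 2 * n := by omega
    have hpq : x (2 * (k : ℕ)) < x (2 * (k : ℕ) + 1) := hx _ _ (by omega) hk2
    have hdp : 0 < deriv g (x (2 * (k : ℕ))) := by
      have := hsig (2 * (k : ℕ)) (by omega)
      rwa [neg_one_pow_even (by omega), one_mul] at this
    have hdq : deriv g (x (2 * (k : ℕ) + 1)) < 0 := by
      have := hsig (2 * (k : ℕ) + 1) hk2
      rw [neg_one_pow_odd (by omega)] at this
      linarith
    obtain ⟨ξ, hmem, hmax⟩ := isCompact_Icc.exists_isMaxOn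
      (Set.nonempty_Icc.mpr hpq.le) hg.continuous.continuousOn
    obtain ⟨t1, ht1mem, ht1⟩ := exists_gt_of_deriv_pos (hg _) hdp hpq
    obtain ⟨t2, ht2mem, ht2⟩ := exists_gt_of_deriv_neg (hg _) hdq hpq
    have hne1 : ξ ≠ x (2 * (k : ℕ)) := by
      intro e
      have h5 := hmax (⟨ht1mem.1.le, ht1mem.2⟩ : t1 ∈ Set.Icc _ _)
      rw [e] at h5
      exact absurd h5 (not_le.mpr ht1)
    have hne2 : ξ ≠ x (2 * (k : ℕ) + 1) := by
      intro e
      have h5 := hmax (⟨ht2mem.1, ht2mem.2.le⟩ : t2 ∈ Set.Icc _ _)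
      rw [e] at h5
      exact absurd h5 (not_le.mpr ht2)
    have hlt1 : x (2 * (k : ℕ)) < ξ := lt_of_le_of_ne hmem.1 (Ne.symm hne1)
    have hlt2 : ξ < x (2 * (k : ℕ) + 1) := lt_of_le_of_ne hmem.2 hne2
    exact ⟨ξ, hlt1, hlt2, hmax.isLocalMax (Icc_mem_nhds hlt1 hlt2)⟩
  choose ξ hξ1 hξ2 hξ3 using hξex
  have hlb : ∀ k : Fin n, x 0 < ξ k := by
    intro k
    rcases Nat.eq_zero_or_pos (2 * (k : ℕ)) with e | e
    · have := hξ1 k; rwa [e] at this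
    · have h1 : x 0 < x (2 * (k : ℕ)) := hx 0 _ e (by omega)
      linarith [hξ1 k]
  have hub : ∀ k : Fin n, ξ k < x 0 + L := by
    intro k
    have h1 : x (2 * (k : ℕ) + 1) ≤ x (2 * n) := by
      have hkn : (k : ℕ) < n := k.isLt
      rcases eq_or_lt_of_le (show 2 * (k : ℕ) + 1 ≤ 2 * n by omega) with e | e
      · rw [e]
      · exact (hx _ _ e le_rfl).le
    rw [hxL] at h1
    linarith [hξ2 k]
  have hord : ∀ k l : Fin n, k < l → ξ k < ξ l := by
    intro k l hkl
    have hkl' : (k : ℕ) < (l : ℕ) := hkl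
    have h1 : x (2 * (k : ℕ) + 1) ≤ x (2 * (l : ℕ)) := by
      rcases eq_or_lt_of_le (show 2 * (k : ℕ) + 1 ≤ 2 * (l : ℕ) by omega) with e | e
      · rw [e]
      · exact (hx _ _ e (by have := l.isLt; omega)).le
    linarith [hξ2 k, hξ1 l]
  refine ⟨fun k => ξ k - L * ⌊ξ k / L⌋, ?_, ?_⟩
  · intro k l he
    by_contra hne
    have habs : |ξ k - ξ l| < L := by
      rw [abs_sub_lt_iff]
      constructor <;> [linarith [hlb l, hub k]; linarith [hlb k, hub l]]
    have heq := fract_eq_inj hL habs he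
    rcases Ne.lt_or_gt hne with hkl | hlk
    · exact absurd heq (ne_of_lt (hord k l hkl))
    · exact absurd heq.symm (ne_of_lt (hord l k hlk))
  · intro k
    refine ⟨sub_floor_mem_Ico hL, ?_⟩
    exact isLocalMax_shift (periodic_int_mul hgper _) (hξ3 k)

end Stmt3Aux

open Stmt3Aux in
/-- For a smooth periodic function with only non-degenerate critical points and at
least `n` local maxima and `n` local minima per period, for almost every
`(a,b) ∈ ℝ²` the function `t ↦ f(t) + (a+b) f'(t) + ab f''(t)` has at least `n`
local maxima (in one period). -/
theorem stmt3 (f : ℝ → ℝ) (L : ℝ) (n : ℕ)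
    (hf : ContDiff ℝ (⊤ : ℕ∞) f) (hL : 0 < L) (hper : ∀ t, f (t + L) = f t)
    (hnd : ∀ t, deriv f t = 0 → deriv (deriv f) t ≠ 0)
    (hmax : ∃ s : Fin n → ℝ, Function.Injective s ∧
      ∀ i, s i ∈ Set.Ico 0 L ∧ IsLocalMax f (s i))
    (hmin : ∃ s : Fin n → ℝ, Function.Injective s ∧
      ∀ i, s i ∈ Set.Ico 0 L ∧ IsLocalMin f (s i)) :
    ∀ᵐ p : ℝ × ℝ ∂(volume : Measure (ℝ × ℝ)),
      ∃ s : Fin n → ℝ, Function.Injective s ∧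
        ∀ i, s i ∈ Set.Ico 0 L ∧
          IsLocalMax (fun t => f t + (p.1 + p.2) * deriv f t
            + p.1 * p.2 * deriv (deriv f) t) (s i) := by
  apply Filter.Eventually.of_forall
  intro p
  rcases Nat.eq_zero_or_pos n with h0 | hn
  · subst h0
    exact ⟨Fin.elim0, fun i => i.elim0, fun i => i.elim0⟩
  have hf' : ContDiff ℝ ∞ f := hf.of_le (by simp)
  have hfd : Differentiable ℝ f := hf'.differentiable (by simp)
  have hc1 : ContDiff ℝ ∞ (deriv f) := (contDiff_infty_iff_deriv.mp hf').2
  have hc2 : ContDiff ℝ ∞ (deriv (deriv f)) := (contDiff_infty_iff_deriv.mp hc1).2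
  have hd1 : Differentiable ℝ (deriv f) := hc1.differentiable (by simp)
  have hd2 : Differentiable ℝ (deriv (deriv f)) := hc2.differentiable (by simp)
  have hd3 : Differentiable ℝ (deriv (deriv (deriv f))) :=
    ((contDiff_infty_iff_deriv.mp hc2).2).differentiable (by simp)
  have per1 : ∀ t, deriv f (t + L) = deriv f t := deriv_periodic hper
  have per2 : ∀ t, deriv (deriv f) (t + L) = deriv (deriv f) t := deriv_periodic per1
  have h1 : AltSign L n (deriv f) := altsign_base hn hf' hL hper hnd hmax
  have h2 : AltSign L n (fun t => deriv f t + p.2 * deriv (deriv f) t) :=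
    altsign_step hn hL hd1 per1 h1
  have hu2diff : Differentiable ℝ (fun t => deriv f t + p.2 * deriv (deriv f) t) :=
    hd1.add (hd2.const_mul _)
  have hu2per : ∀ t, (fun t => deriv f t + p.2 * deriv (deriv f) t) (t + L)
      = (fun t => deriv f t + p.2 * deriv (deriv f) t) t := by
    intro t
    simp only [per1, per2]
  have h3 := altsign_step (b := p.1) hn hL hu2diff hu2per h2
  have key : ∀ t, deriv (fun t => f t + (p.1 + p.2) * deriv f t
      + p.1 * p.2 * deriv (deriv f) t) t
      = (fun t => deriv f t + p.2 * deriv (deriv f) t) t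
        + p.1 * deriv (fun t => deriv f t + p.2 * deriv (deriv f) t) t := by
    intro t
    have e1 : deriv (fun t => deriv f t + p.2 * deriv (deriv f) t) t
        = deriv (deriv f) t + p.2 * deriv (deriv (deriv f)) t := by
      rw [deriv_fun_add (hd1 t) ((hd2 t).const_mul _), deriv_const_mul _ (hd2 t)]
    have e2 : deriv (fun t => f t + (p.1 + p.2) * deriv f t
        + p.1 * p.2 * deriv (deriv f) t) t
        = deriv f t + (p.1 + p.2) * deriv (deriv f) t
          + p.1 * p.2 * deriv (deriv (deriv f)) t := by
      rw [deriv_fun_add ((hfd t).fun_add ((hd1 t).const_mul _)) ((hd2 t).const_mul _),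
        deriv_fun_add (hfd t) ((hd1 t).const_mul _),
        deriv_const_mul _ (hd1 t), deriv_const_mul _ (hd2 t)]
    rw [e1, e2]
    dsimp only
    ring
  have h4 : AltSign L n (deriv (fun t => f t + (p.1 + p.2) * deriv f t
      + p.1 * p.2 * deriv (deriv f) t)) := by
    obtain ⟨x, hxm, hxL2, hsg⟩ := h3
    exact ⟨x, hxm, hxL2, fun i hi => by rw [key]; exact hsg i hi⟩
  have gdiff : Differentiable ℝ (fun t => f t + (p.1 + p.2) * deriv f t
      + p.1 * p.2 * deriv (deriv f) t) :=
    (hfd.add (hd1.const_mul _)).add (hd2.const_mul _)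
  have gper : ∀ t, (fun t => f t + (p.1 + p.2) * deriv f t
      + p.1 * p.2 * deriv (deriv f) t) (t + L)
      = (fun t => f t + (p.1 + p.2) * deriv f t + p.1 * p.2 * deriv (deriv f) t) t := by
    intro t
    simp only [hper, per1, per2]
  exact altsign_extract hL gdiff gper h4
end

section
/- For n ≥ 3 odd and a unit vector v = (x, y, z) ∈ ℝ³ with x ≠ 0, the function h_v(t) = x t^n + n y t^{n−1} + n(n−1) z t^{n−2} has exactly one local maximum on ℝ if y² − 4((n−2)/(n−1)) x z > 0, and no local maximum if y² − 4((n−2)/(n−1)) x z < 0. -/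
open Set Filter Topology

private lemma glueMono {f : ℝ → ℝ} {a c b : ℝ} (hac : a ≤ c) (hcb : c ≤ b)
    (h1 : StrictMonoOn f (Icc a c)) (h2 : StrictMonoOn f (Icc c b)) :
    StrictMonoOn f (Icc a b) := by
  intro s hs t ht hst
  rcases le_total t c with h | h
  · exact h1 ⟨hs.1, hst.le.trans h⟩ ⟨ht.1, h⟩ hst
  · rcases lt_or_ge s c with h' | h'
    · rcases lt_or_ge c t with h'' | h''
      · exact lt_trans (h1 ⟨hs.1, h'.le⟩ ⟨hac, le_refl _⟩ h')
          (h2 ⟨le_refl _, hcb⟩ ⟨h, ht.2⟩ h'')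
      · have ht2 : t = c := le_antisymm h'' h
        subst ht2
        exact h1 ⟨hs.1, h'.le⟩ ⟨hac, le_refl _⟩ h'
    · exact h2 ⟨h', hs.2⟩ ⟨h'.trans hst.le, ht.2⟩ hst

private lemma keyMono {f f' : ℝ → ℝ} (hf : ∀ t, HasDerivAt f (f' t) t) {a b : ℝ}
    (hpos : ∀ t ∈ Ioo a b, t ≠ 0 → 0 < f' t) : StrictMonoOn f (Icc a b) := by
  have hc : Continuous f := by
    rw [continuous_iff_continuousAt]; exact fun t => (hf t).continuousAt
  have hd : ∀ t, deriv f t = f' t := fun t => (hf t).deriv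
  by_cases h0 : 0 ∈ Ioo a b
  · refine glueMono h0.1.le h0.2.le
      (strictMonoOn_of_deriv_pos (convex_Icc a 0) hc.continuousOn ?_)
      (strictMonoOn_of_deriv_pos (convex_Icc 0 b) hc.continuousOn ?_)
    · intro t ht
      rw [interior_Icc] at ht
      rw [hd]
      exact hpos t ⟨ht.1, ht.2.trans h0.2⟩ (ne_of_lt ht.2)
    · intro t ht
      rw [interior_Icc] at ht
      rw [hd]
      exact hpos t ⟨h0.1.trans ht.1, ht.2⟩ (ne_of_gt ht.1)
  · refine strictMonoOn_of_deriv_pos (convex_Icc a b) hc.continuousOn ?_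
    intro t ht
    rw [interior_Icc] at ht
    rw [hd]
    exact hpos t ht (fun h => h0 (h ▸ ht))

private lemma keyAnti {f f' : ℝ → ℝ} (hf : ∀ t, HasDerivAt f (f' t) t) {a b : ℝ}
    (hneg : ∀ t ∈ Ioo a b, t ≠ 0 → f' t < 0) : StrictAntiOn f (Icc a b) := by
  have h := keyMono (f := fun t => -f t) (f' := fun t => -f' t) (fun t => (hf t).neg)
    (fun t ht h0 => neg_pos.mpr (hneg t ht h0))
  intro s hs t ht hst
  have := h hs ht hst
  simpa using this

private lemma notMaxRight {f : ℝ → ℝ} {t b : ℝ} (htb : t < b)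
    (hm : StrictMonoOn f (Icc t b)) : ¬ IsLocalMax f t := by
  intro h
  have h1 : ∀ᶠ s in 𝓝[>] t, f s ≤ f t := h.filter_mono nhdsWithin_le_nhds
  have h2 : ∀ᶠ s in 𝓝[>] t, s < b :=
    eventually_nhdsWithin_of_eventually_nhds (tendsto_id.eventually_lt_const htb)
  have h3 : ∀ᶠ s in 𝓝[>] t, t < s := eventually_mem_nhdsWithin
  obtain ⟨s, hs1, hs2, hs3⟩ := (h1.and (h2.and h3)).exists
  have : f t < f s := hm ⟨le_refl _, htb.le⟩ ⟨hs3.le, hs2.le⟩ hs3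
  linarith

private lemma notMaxLeft {f : ℝ → ℝ} {a t : ℝ} (hat : a < t)
    (hm : StrictAntiOn f (Icc a t)) : ¬ IsLocalMax f t := by
  intro h
  have h1 : ∀ᶠ s in 𝓝[<] t, f s ≤ f t := h.filter_mono nhdsWithin_le_nhds
  have h2 : ∀ᶠ s in 𝓝[<] t, a < s :=
    eventually_nhdsWithin_of_eventually_nhds (tendsto_id.eventually_const_lt hat)
  have h3 : ∀ᶠ s in 𝓝[<] t, s < t := eventually_mem_nhdsWithin
  obtain ⟨s, hs1, hs2, hs3⟩ := (h1.and (h2.and h3)).exists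
  have : f t < f s := hm ⟨hs2.le, hs3.le⟩ ⟨hat.le, le_refl _⟩ hs3
  linarith

private lemma hderiv (n : ℕ) (hn : 3 ≤ n) (x y z : ℝ) (t : ℝ) :
    HasDerivAt (fun t : ℝ => x * t ^ n + n * y * t ^ (n - 1) + n * (n - 1) * z * t ^ (n - 2))
      ((n : ℝ) * t ^ (n - 3) *
        (x * t ^ 2 + ((n : ℝ) - 1) * y * t + ((n : ℝ) - 1) * ((n : ℝ) - 2) * z)) t := by
  have h1 := (hasDerivAt_pow n t).const_mul x
  have h2 := (hasDerivAt_pow (n - 1) t).const_mul ((n : ℝ) * y)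
  have h3 := (hasDerivAt_pow (n - 2) t).const_mul ((n : ℝ) * ((n : ℝ) - 1) * z)
  have h := (h1.add h2).add h3
  refine h.congr_deriv ?_
  have e1 : n - 1 - 1 = n - 2 := by omega
  have e2 : n - 2 - 1 = n - 3 := by omega
  rw [e1, e2]
  have p1 : t ^ (n - 1) = t ^ (n - 3) * t ^ 2 := by rw [← pow_add]; congr 1; omega
  have p2 : t ^ (n - 2) = t ^ (n - 3) * t := by rw [← pow_succ]; congr 1; omega
  have c1 : ((n - 1 : ℕ) : ℝ) = (n : ℝ) - 1 := by
    rw [Nat.cast_sub (by omega)]; norm_num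
  have c2 : ((n - 2 : ℕ) : ℝ) = (n : ℝ) - 2 := by
    rw [Nat.cast_sub (by omega)]; norm_num
  rw [p1, p2, c1, c2]
  ring

private lemma master (n : ℕ) (hn : 3 ≤ n) (hodd : Odd n) (x y z : ℝ) (hx : 0 < x) :
    (y ^ 2 - 4 * (((n : ℝ) - 2) / ((n : ℝ) - 1)) * x * z > 0 →
      ∃! t : ℝ, IsLocalMax
        (fun t : ℝ => x * t ^ n + n * y * t ^ (n - 1) + n * (n - 1) * z * t ^ (n - 2)) t) ∧
    (y ^ 2 - 4 * (((n : ℝ) - 2) / ((n : ℝ) - 1)) * x * z < 0 →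
      ∀ t : ℝ, ¬ IsLocalMax
        (fun t : ℝ => x * t ^ n + n * y * t ^ (n - 1) + n * (n - 1) * z * t ^ (n - 2)) t) := by
  have hn3 : (3 : ℝ) ≤ (n : ℝ) := by exact_mod_cast hn
  set B : ℝ := ((n : ℝ) - 1) * y with hB
  set C : ℝ := ((n : ℝ) - 1) * ((n : ℝ) - 2) * z with hC
  set f : ℝ → ℝ := fun t : ℝ => x * t ^ n + n * y * t ^ (n - 1) + n * (n - 1) * z * t ^ (n - 2)
    with hfdef
  set q : ℝ → ℝ := fun t : ℝ => x * t ^ 2 + B * t + C with hq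
  set f' : ℝ → ℝ := fun t : ℝ => (n : ℝ) * t ^ (n - 3) * q t with hf'
  have hf : ∀ t, HasDerivAt f (f' t) t := fun t => hderiv n hn x y z t
  have hev : Even (n - 3) := Nat.Odd.sub_odd hodd (by decide)
  have hpow : ∀ t : ℝ, t ≠ 0 → 0 < t ^ (n - 3) := fun t ht => hev.pow_pos ht
  have hnpos : (0 : ℝ) < n := by linarith
  have hne : (n : ℝ) - 1 ≠ 0 := by intro h; nlinarith
  have hrel : ((n : ℝ) - 1) ^ 2 * (y ^ 2 - 4 * (((n : ℝ) - 2) / ((n : ℝ) - 1)) * x * z)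
      = B ^ 2 - 4 * x * C := by
    field_simp [hB, hC]; ring
  constructor
  · -- D > 0 case
    intro hD
    have hΔ : 0 < B ^ 2 - 4 * x * C := by
      rw [← hrel]
      have : (0 : ℝ) < ((n : ℝ) - 1) ^ 2 := by positivity
      exact mul_pos this hD
    set s : ℝ := Real.sqrt (B ^ 2 - 4 * x * C) with hsdef
    have hs2 : s ^ 2 = B ^ 2 - 4 * x * C := Real.sq_sqrt hΔ.le
    have hs : 0 < s := Real.sqrt_pos.mpr hΔ
    set α : ℝ := (-B - s) / (2 * x) with hα
    set β : ℝ := (-B + s) / (2 * x) with hβ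
    have h2x : (0 : ℝ) < 2 * x := by linarith
    have hαβ : α < β := by
      rw [hα, hβ, div_lt_div_iff₀ h2x h2x]; nlinarith
    have hsum : α + β = -B / x := by
      rw [hα, hβ]; field_simp; ring
    have hprod : α * β = C / x := by
      rw [hα, hβ, div_mul_div_comm, div_eq_div_iff (by positivity) (ne_of_gt hx)]
      nlinarith [hs2]
    clear_value α β s
    have hfact : ∀ u, q u = x * (u - α) * (u - β) := by
      intro u
      have : x * (u - α) * (u - β) = x * u ^ 2 - x * (α + β) * u + x * (α * β) := by ring
      rw [hq, this, hsum, hprod]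
      field_simp
      ring
    have hq_lt : ∀ u, u < α → 0 < q u := by
      intro u hu
      rw [hfact]
      have h1 : u - α < 0 := by linarith
      have h2 : u - β < 0 := by linarith
      rw [mul_assoc]
      exact mul_pos hx (mul_pos_of_neg_of_neg h1 h2)
    have hq_mid : ∀ u, α < u → u < β → q u < 0 := by
      intro u h1 h2
      rw [hfact]
      have h3 : 0 < u - α := by linarith
      have h4 : u - β < 0 := by linarith
      rw [mul_assoc]
      exact mul_neg_of_pos_of_neg hx (mul_neg_of_pos_of_neg h3 h4)
    have hq_gt : ∀ u, β < u → 0 < q u := by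
      intro u hu
      rw [hfact]
      have h1 : 0 < u - α := by linarith
      have h2 : 0 < u - β := by linarith
      rw [mul_assoc]
      exact mul_pos hx (mul_pos h1 h2)
    have hmax : IsLocalMax f α := by
      have m1 : StrictMonoOn f (Icc (α - 1) α) :=
        keyMono hf (fun u hu h0 => mul_pos (mul_pos hnpos (hpow u h0)) (hq_lt u hu.2))
      have m2 : StrictAntiOn f (Icc α β) :=
        keyAnti hf (fun u hu h0 =>
          mul_neg_of_pos_of_neg (mul_pos hnpos (hpow u h0)) (hq_mid u hu.1 hu.2))
      have hmem : Ioo (α - 1) β ∈ 𝓝 α := Ioo_mem_nhds (by linarith) hαβ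
      filter_upwards [hmem] with u hu
      rcases le_total u α with h | h
      · rcases eq_or_lt_of_le h with h' | h'
        · exact le_of_eq (by rw [h'])
        · exact (m1 ⟨hu.1.le, h⟩ ⟨by linarith, le_refl _⟩ h').le
      · rcases eq_or_lt_of_le h with h' | h'
        · exact le_of_eq (by rw [← h'])
        · exact (m2 ⟨le_refl _, hαβ.le⟩ ⟨h, hu.2.le⟩ h').le
    refine ⟨α, hmax, ?_⟩
    intro t ht
    rcases lt_trichotomy t α with h | h | h
    · exact absurd ht (notMaxRight h
        (keyMono hf (fun u hu h0 => mul_pos (mul_pos hnpos (hpow u h0)) (hq_lt u hu.2))))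
    · exact h
    · rcases le_or_gt t β with h2 | h2
      · exact absurd ht (notMaxLeft h
          (keyAnti hf (fun u hu h0 => mul_neg_of_pos_of_neg (mul_pos hnpos (hpow u h0))
            (hq_mid u hu.1 (lt_of_lt_of_le hu.2 h2)))))
      · exact absurd ht (notMaxRight (lt_add_one t)
          (keyMono hf (fun u hu h0 => mul_pos (mul_pos hnpos (hpow u h0))
            (hq_gt u (h2.trans hu.1)))))
  · -- D < 0 case
    intro hD t
    have hΔ : B ^ 2 - 4 * x * C < 0 := by
      rw [← hrel]
      have h1 : (0 : ℝ) < ((n : ℝ) - 1) ^ 2 := by positivity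
      exact mul_neg_of_pos_of_neg h1 hD
    have hq_pos : ∀ u, 0 < q u := by
      intro u
      have h2 : 0 < x * (x * u ^ 2 + B * u + C) := by
        nlinarith [sq_nonneg (x * u + B / 2)]
      show 0 < x * u ^ 2 + B * u + C
      rcases mul_pos_iff.mp h2 with ⟨_, h⟩ | ⟨h, _⟩
      · exact h
      · linarith
    exact notMaxRight (lt_add_one t)
      (keyMono hf (fun u _ h0 => mul_pos (mul_pos hnpos (hpow u h0)) (hq_pos u)))

/-- For odd `n ≥ 3` and a unit vector `(x,y,z)` with `x ≠ 0`, the function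
`h(t) = x tⁿ + n y tⁿ⁻¹ + n(n-1) z tⁿ⁻²` has exactly one local maximum if
`y² - 4((n-2)/(n-1)) x z > 0`, and none if `y² - 4((n-2)/(n-1)) x z < 0`. -/
theorem stmt4 (n : ℕ) (hn : 3 ≤ n) (hodd : Odd n) (x y z : ℝ)
    (hunit : x ^ 2 + y ^ 2 + z ^ 2 = 1) (hx : x ≠ 0) :
    (y ^ 2 - 4 * (((n : ℝ) - 2) / ((n : ℝ) - 1)) * x * z > 0 →
      ∃! t : ℝ, IsLocalMax
        (fun t : ℝ => x * t ^ n + n * y * t ^ (n - 1) + n * (n - 1) * z * t ^ (n - 2)) t) ∧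
    (y ^ 2 - 4 * (((n : ℝ) - 2) / ((n : ℝ) - 1)) * x * z < 0 →
      ∀ t : ℝ, ¬ IsLocalMax
        (fun t : ℝ => x * t ^ n + n * y * t ^ (n - 1) + n * (n - 1) * z * t ^ (n - 2)) t) := by
  rcases hx.lt_or_gt with hxneg | hxpos
  · -- x < 0 : reduce to -x, y, -z via t ↦ -t
    have hev1 : Even (n - 1) := Nat.Odd.sub_odd hodd odd_one
    have hodd2 : Odd (n - 2) := Nat.Odd.sub_even (by omega) hodd even_two
    obtain ⟨h1, h2⟩ := master n hn hodd (-x) y (-z) (by linarith)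
    set H : ℝ → ℝ := fun t : ℝ => x * t ^ n + n * y * t ^ (n - 1) + n * (n - 1) * z * t ^ (n - 2)
      with hH
    have hH' : (fun t : ℝ => -x * t ^ n + ↑n * y * t ^ (n - 1) + ↑n * (↑n - 1) * -z * t ^ (n - 2))
        = fun t : ℝ => H (-t) := by
      funext t
      rw [hH]
      simp only [hodd.neg_pow, hev1.neg_pow, hodd2.neg_pow]
      ring
    rw [hH'] at h1 h2
    have hloc : ∀ t : ℝ, IsLocalMax (fun s : ℝ => H (-s)) t ↔ IsLocalMax H (-t) := by
      intro t
      have hmap : Filter.map (fun s : ℝ => -s) (nhds t) = nhds (-t) := by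
        simpa using (Homeomorph.neg ℝ).map_nhds_eq t
      constructor
      · intro h
        have h' : ∀ᶠ s in nhds t, H (-s) ≤ H (-t) := h
        rw [IsLocalMax, IsMaxFilter, ← hmap, Filter.eventually_map]
        exact h'
      · intro h
        have h' : ∀ᶠ u in nhds (-t), H u ≤ H (-t) := h
        rw [← hmap, Filter.eventually_map] at h'
        exact h'
    have heq : ∀ w : ℝ, y ^ 2 - 4 * (((n : ℝ) - 2) / ((n : ℝ) - 1)) * -x * -z
        = y ^ 2 - 4 * (((n : ℝ) - 2) / ((n : ℝ) - 1)) * x * z := fun _ => by ring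
    constructor
    · intro hD
      obtain ⟨t₀, ht₀, huniq⟩ := h1 (by rw [heq 0]; exact hD)
      refine ⟨-t₀, (hloc t₀).mp ht₀, ?_⟩
      intro t ht
      have : -t = t₀ := huniq (-t) ((hloc (-t)).mpr (by rwa [neg_neg]))
      linarith
    · intro hD t ht
      exact h2 (by rw [heq 0]; exact hD) (-t) ((hloc (-t)).mpr (by rwa [neg_neg]))
  · exact master n hn hodd x y z hxpos
end

section
/- Let f : S¹ → ℝ be a smooth function whose critical points are all non-degenerate, and suppose f has exactly n local maxima, all of whose values exceed all values of f at local minima. Then the holonomic curve c(t) = (f(t), f'(t), f''(t)) has linking number −n with the x₁-axis; equivalently, the plane curve t ↦ (f'(t), f''(t)) winds −n times around the origin. -/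
open intervalIntegral Real
open Filter Topology Set MeasureTheory


lemma slope_tendsto {u : ℝ → ℝ} {c a : ℝ} (hu : HasDerivAt u c a) (h0 : u a = 0) :
    Tendsto (fun t => u t / (t - a)) (𝓝[≠] a) (𝓝 c) := by
  have := hasDerivAt_iff_tendsto_slope.mp hu
  refine this.congr fun t => ?_
  simp [slope_def_field, h0]

lemma sign_near {u : ℝ → ℝ} {c a : ℝ} (hu : HasDerivAt u c a) (h0 : u a = 0)
    (hc : c ≠ 0) :
    ∀ᶠ t in 𝓝[≠] a, (0 < u t ↔ 0 < c * (t - a)) ∧ u t ≠ 0 := by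
  have hq := slope_tendsto hu h0
  have hpos : (0:ℝ) < c * c := mul_self_pos.mpr hc
  have h1 : ∀ᶠ t in 𝓝[≠] a, 0 < (u t / (t - a)) * c :=
    (hq.mul_const c).eventually (eventually_gt_nhds hpos)
  filter_upwards [h1, self_mem_nhdsWithin] with t ht (hta : t ≠ a)
  have hs : t - a ≠ 0 := sub_ne_zero.mpr hta
  have hut : u t = (u t / (t - a)) * (t - a) := by field_simp
  set q := u t / (t - a) with hqdef
  constructor
  · rw [hut]
    rcases lt_or_gt_of_ne hs with h | h
    · constructor <;> intro hh <;> nlinarith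
    · constructor <;> intro hh <;> nlinarith
  · rw [hut]
    intro hz
    rcases mul_eq_zero.mp hz with h | h
    · rw [h] at ht; simp at ht
    · exact hs h

lemma ratio_atTop {f1 f2 : ℝ → ℝ} {a : ℝ}
    (h12 : HasDerivAt f1 (f2 a) a) (hc2 : ContinuousAt f2 a)
    (ha : f1 a = 0) (hva : f2 a ≠ 0) :
    Tendsto (fun t => f2 t / f1 t) (𝓝[>] a) atTop := by
  have hmono : 𝓝[>] a ≤ 𝓝[≠] a := nhdsWithin_mono _ fun t ht => ne_of_gt ht
  have hq : Tendsto (fun t => f1 t / (t - a)) (𝓝[>] a) (𝓝 (f2 a)) :=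
    (slope_tendsto h12 ha).mono_left hmono
  have h2 : Tendsto f2 (𝓝[>] a) (𝓝 (f2 a)) :=
    (hc2.tendsto).mono_left nhdsWithin_le_nhds
  have hr : Tendsto (fun t => f2 t / (f1 t / (t - a))) (𝓝[>] a) (𝓝 1) := by
    have := h2.div hq hva
    rwa [div_self hva] at this
  have hinv : Tendsto (fun t => (t - a)⁻¹) (𝓝[>] a) atTop := by
    have hsub : Tendsto (fun t => t - a) (𝓝[>] a) (𝓝[>] 0) := by
      apply tendsto_nhdsWithin_of_tendsto_nhds_of_eventually_within
      · have h0 : Tendsto (fun t : ℝ => t - a) (𝓝 a) (𝓝 (a - a)) :=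
          tendsto_id.sub_const a
        rw [sub_self] at h0
        exact h0.mono_left nhdsWithin_le_nhds
      · filter_upwards [self_mem_nhdsWithin] with t (ht : a < t)
        simpa [Set.mem_Ioi] using sub_pos.mpr ht
    exact tendsto_inv_nhdsGT_zero.comp hsub
  have hmul := hr.pos_mul_atTop one_pos hinv
  refine hmul.congr' ?_
  filter_upwards [self_mem_nhdsWithin] with t (ht : a < t)
  have hs : t - a ≠ 0 := sub_ne_zero.mpr (ne_of_gt ht)
  rcases eq_or_ne (f1 t) 0 with h | h
  · simp [h]
  · field_simp

lemma ratio_atBot {f1 f2 : ℝ → ℝ} {b : ℝ}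
    (h12 : HasDerivAt f1 (f2 b) b) (hc2 : ContinuousAt f2 b)
    (hb : f1 b = 0) (hvb : f2 b ≠ 0) :
    Tendsto (fun t => f2 t / f1 t) (𝓝[<] b) atBot := by
  have hmono : 𝓝[<] b ≤ 𝓝[≠] b := nhdsWithin_mono _ fun t ht => ne_of_lt ht
  have hq : Tendsto (fun t => f1 t / (t - b)) (𝓝[<] b) (𝓝 (f2 b)) :=
    (slope_tendsto h12 hb).mono_left hmono
  have h2 : Tendsto f2 (𝓝[<] b) (𝓝 (f2 b)) :=
    (hc2.tendsto).mono_left nhdsWithin_le_nhds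
  have hr : Tendsto (fun t => f2 t / (f1 t / (t - b))) (𝓝[<] b) (𝓝 1) := by
    have := h2.div hq hvb
    rwa [div_self hvb] at this
  have hinv : Tendsto (fun t => (t - b)⁻¹) (𝓝[<] b) atBot := by
    have hsub : Tendsto (fun t => t - b) (𝓝[<] b) (𝓝[<] 0) := by
      apply tendsto_nhdsWithin_of_tendsto_nhds_of_eventually_within
      · have h0 : Tendsto (fun t : ℝ => t - b) (𝓝 b) (𝓝 (b - b)) :=
          tendsto_id.sub_const b
        rw [sub_self] at h0
        exact h0.mono_left nhdsWithin_le_nhds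
      · filter_upwards [self_mem_nhdsWithin] with t (ht : t < b)
        simpa [Set.mem_Iio] using sub_neg.mpr ht
    have : Tendsto (fun x : ℝ => x⁻¹) (𝓝[<] (0:ℝ)) atBot := by
      have hneg : Tendsto (fun x : ℝ => -x) (𝓝[<] (0:ℝ)) (𝓝[>] (0:ℝ)) := by
        apply tendsto_nhdsWithin_of_tendsto_nhds_of_eventually_within
        · have h0 : Tendsto (fun t : ℝ => -t) (𝓝 (0:ℝ)) (𝓝 (-0)) := tendsto_neg _
          rw [neg_zero] at h0
          exact h0.mono_left nhdsWithin_le_nhds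
        · filter_upwards [self_mem_nhdsWithin] with t (ht : t < 0)
          simpa [Set.mem_Ioi] using ht
      have := tendsto_neg_atTop_atBot.comp (tendsto_inv_nhdsGT_zero.comp hneg)
      refine this.congr fun x => ?_
      simp [Function.comp, inv_neg]
    exact this.comp hsub
  have hmul := hr.pos_mul_atBot one_pos hinv
  refine hmul.congr' ?_
  filter_upwards [self_mem_nhdsWithin] with t (ht : t < b)
  have hs : t - b ≠ 0 := sub_ne_zero.mpr (ne_of_lt ht)
  rcases eq_or_ne (f1 t) 0 with h | h
  · simp [h]
  · field_simp

lemma key_interval {f1 f2 f3 : ℝ → ℝ}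
    (h12 : ∀ x, HasDerivAt f1 (f2 x) x) (h23 : ∀ x, HasDerivAt f2 (f3 x) x)
    (hc3 : Continuous f3)
    (hreg : ∀ t, f1 t ^ 2 + f2 t ^ 2 ≠ 0)
    {a b : ℝ} (hab : a < b) (ha : f1 a = 0) (hb : f1 b = 0)
    (hno : ∀ t ∈ Set.Ioo a b, f1 t ≠ 0) :
    ∫ t in a..b, (f1 t * f3 t - f2 t ^ 2) / (f1 t ^ 2 + f2 t ^ 2) = -π := by
  have hc1 : Continuous f1 := by
    rw [continuous_iff_continuousAt]; exact fun x => (h12 x).continuousAt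
  have hc2 : Continuous f2 := by
    rw [continuous_iff_continuousAt]; exact fun x => (h23 x).continuousAt
  have hg : Continuous fun t => (f1 t * f3 t - f2 t ^ 2) / (f1 t ^ 2 + f2 t ^ 2) :=
    Continuous.div (by continuity) (by continuity) hreg
  have hva : f2 a ≠ 0 := by
    intro h; exact hreg a (by rw [ha, h]; ring)
  have hvb : f2 b ≠ 0 := by
    intro h; exact hreg b (by rw [hb, h]; ring)
  have hderiv : ∀ x ∈ Set.Ioo a b,
      HasDerivAt (fun t => arctan (f2 t / f1 t))
        ((f1 x * f3 x - f2 x ^ 2) / (f1 x ^ 2 + f2 x ^ 2)) x := by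
    intro x hx
    have hx1 : f1 x ≠ 0 := hno x hx
    have hdiv : HasDerivAt (fun t => f2 t / f1 t)
        ((f3 x * f1 x - f2 x * f2 x) / (f1 x) ^ 2) x := (h23 x).div (h12 x) hx1
    have harc := (Real.hasDerivAt_arctan (f2 x / f1 x)).comp x hdiv
    refine harc.congr_deriv ?_
    have hd := hreg x
    field_simp
  have haT : Tendsto (fun t => arctan (f2 t / f1 t)) (𝓝[>] a) (𝓝 (π / 2)) :=
    (tendsto_arctan_atTop.mono_right nhdsWithin_le_nhds).comp
      (ratio_atTop (h12 a) (h23 a).continuousAt ha hva)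
  have hbT : Tendsto (fun t => arctan (f2 t / f1 t)) (𝓝[<] b) (𝓝 (-(π / 2))) :=
    (tendsto_arctan_atBot.mono_right nhdsWithin_le_nhds).comp
      (ratio_atBot (h12 b) (h23 b).continuousAt hb hvb)
  rw [intervalIntegral.integral_eq_sub_of_hasDerivAt_of_tendsto hab hderiv
    (hg.intervalIntegrable a b) haT hbT]
  ring

-- right of a: sign of f1 = sign of f2 a ; left of a: opposite
lemma sign_right {f1 f2 : ℝ → ℝ} {a : ℝ} (h12 : HasDerivAt f1 (f2 a) a)
    (ha : f1 a = 0) (hva : f2 a ≠ 0) :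
    ∀ᶠ t in 𝓝[>] a, (0 < f1 t ↔ 0 < f2 a) ∧ f1 t ≠ 0 := by
  have h := (sign_near h12 ha hva).filter_mono
    (nhdsWithin_mono _ fun t (ht : a < t) => ne_of_gt ht)
  filter_upwards [h, self_mem_nhdsWithin] with t ht (hta : a < t)
  refine ⟨?_, ht.2⟩
  rw [ht.1]
  constructor
  · intro hh; nlinarith
  · intro hh; nlinarith
lemma sign_left {f1 f2 : ℝ → ℝ} {b : ℝ} (h12 : HasDerivAt f1 (f2 b) b)
    (hb : f1 b = 0) (hvb : f2 b ≠ 0) :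
    ∀ᶠ t in 𝓝[<] b, (0 < f1 t ↔ f2 b < 0) ∧ f1 t ≠ 0 := by
  have h := (sign_near h12 hb hvb).filter_mono
    (nhdsWithin_mono _ fun t (ht : t < b) => ne_of_lt ht)
  filter_upwards [h, self_mem_nhdsWithin] with t ht (hta : t < b)
  refine ⟨?_, ht.2⟩
  rw [ht.1]
  constructor
  · intro hh; nlinarith
  · intro hh; nlinarith

lemma alternate {f1 f2 : ℝ → ℝ}
    (h12 : ∀ x, HasDerivAt f1 (f2 x) x)
    {a b : ℝ} (hab : a < b) (ha : f1 a = 0) (hb : f1 b = 0)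
    (hva : f2 a ≠ 0) (hvb : f2 b ≠ 0)
    (hno : ∀ t ∈ Set.Ioo a b, f1 t ≠ 0) :
    f2 a < 0 ↔ 0 < f2 b := by
  have hc1 : Continuous f1 := by
    rw [continuous_iff_continuousAt]; exact fun x => (h12 x).continuousAt
  -- pick x near a (inside (a,b)) with sign f1 x = sign f2 a
  have hxev : ∀ᶠ t in 𝓝[>] a, ((0 < f1 t ↔ 0 < f2 a) ∧ f1 t ≠ 0) ∧ t ∈ Set.Ioo a b := by
    filter_upwards [sign_right (h12 a) ha hva, Ioo_mem_nhdsGT_of_mem ⟨le_refl a, hab⟩]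
      with t h1 h2 using ⟨h1, h2⟩
  obtain ⟨x, hx⟩ := hxev.exists
  have hyev : ∀ᶠ t in 𝓝[<] b, ((0 < f1 t ↔ f2 b < 0) ∧ f1 t ≠ 0) ∧ t ∈ Set.Ioo x b := by
    filter_upwards [sign_left (h12 b) hb hvb, Ioo_mem_nhdsLT_of_mem ⟨hx.2.2, le_refl b⟩]
      with t h1 h2 using ⟨h1, h2⟩
  obtain ⟨y, hy⟩ := hyev.exists
  have hxy : x < y := hy.2.1
  have hcont : ContinuousOn f1 (Set.Icc x y) := hc1.continuousOn
  have hxIoo := hx.2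
  have hyIoo : y ∈ Set.Ioo a b := ⟨lt_trans hxIoo.1 hxy, hy.2.2⟩
  have hsub : Set.Ioo x y ⊆ Set.Ioo a b := fun t ht =>
    ⟨lt_trans hxIoo.1 ht.1, lt_trans ht.2 hyIoo.2⟩
  constructor
  · intro hA
    by_contra hB
    have hB' : f2 b < 0 := lt_of_le_of_ne (not_lt.mp hB) hvb
    -- f1 x < 0, f1 y > 0 : zero in between
    have hx0 : f1 x < 0 := by
      rcases lt_or_gt_of_ne hx.1.2 with h | h
      · exact h
      · exact absurd (hx.1.1.mp h) (not_lt.mpr hA.le)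
    have hy0 : 0 < f1 y := hy.1.1.mpr hB'
    have := intermediate_value_Ioo hxy.le hcont (a := x) (b := y)
    obtain ⟨z, hz, hz0⟩ := this ⟨hx0, hy0⟩
    exact hno z (hsub hz) hz0
  · intro hB
    by_contra hA
    have hA' : 0 < f2 a := lt_of_le_of_ne (not_lt.mp hA) (Ne.symm hva)
    have hx0 : 0 < f1 x := hx.1.1.mpr hA'
    have hy0 : f1 y < 0 := by
      rcases lt_or_gt_of_ne hy.1.2 with h | h
      · exact h
      · exact absurd (hy.1.1.mp h) (not_lt.mpr hB.le)
    obtain ⟨z, hz, hz0⟩ := intermediate_value_Ioo' hxy.le hcont ⟨hy0, hx0⟩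
    exact hno z (hsub hz) hz0

lemma zeros_finite {f1 f2 : ℝ → ℝ}
    (h12 : ∀ x, HasDerivAt f1 (f2 x) x)
    (hreg : ∀ t, f1 t = 0 → f2 t ≠ 0) (A B : ℝ) :
    {t ∈ Set.Icc A B | f1 t = 0}.Finite := by
  have hc1 : Continuous f1 := by
    rw [continuous_iff_continuousAt]; exact fun x => (h12 x).continuousAt
  set Z := {t ∈ Set.Icc A B | f1 t = 0} with hZ
  have hclosed : IsClosed Z := by
    have : Z = Set.Icc A B ∩ f1 ⁻¹' {0} := by ext t; simp [hZ]
    rw [this]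
    exact isClosed_Icc.inter (isClosed_singleton.preimage hc1)
  have hcomp : IsCompact Z := (isCompact_Icc).of_isClosed_subset hclosed fun t ht => ht.1
  refine hcomp.finite ?_
  rw [isDiscrete_iff_nhdsNE]
  intro x hx
  have hiso : ∀ᶠ t in 𝓝[≠] x, f1 t ≠ 0 := by
    filter_upwards [sign_near (h12 x) hx.2 (hreg x hx.2)] with t ht using ht.2
  rw [← Filter.empty_mem_iff_bot]
  have hmem : {t | f1 t ≠ 0} ∩ Z ∈ 𝓝[≠] x ⊓ 𝓟 Z :=
    Filter.inter_mem (Filter.mem_inf_of_left hiso)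
      (Filter.mem_inf_of_right (Filter.mem_principal_self Z))
  refine Filter.mem_of_superset hmem ?_
  rintro t ⟨h1, h2⟩
  exact absurd h2.2 h1

lemma max_iff {f : ℝ → ℝ}
    (hd1 : ∀ x, HasDerivAt f (deriv f x) x)
    (hd2 : ∀ x, HasDerivAt (deriv f) (deriv (deriv f) x) x)
    (hreg : ∀ s, deriv f s = 0 → deriv (deriv f) s ≠ 0) (t : ℝ) :
    IsLocalMax f t ↔ (deriv f t = 0 ∧ deriv (deriv f) t < 0) := by
  constructor
  · intro hmax
    have h1 : deriv f t = 0 := hmax.deriv_eq_zero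
    refine ⟨h1, ?_⟩
    by_contra hcon
    have h2 : 0 < deriv (deriv f) t := lt_of_le_of_ne (not_lt.mp hcon) (Ne.symm (hreg t h1))
    have hev : ∀ᶠ x in 𝓝[>] t, 0 < deriv f x := by
      filter_upwards [sign_right (hd2 t) h1 (ne_of_gt h2)] with x hx using hx.1.mpr h2
    obtain ⟨c, hc, hsub⟩ := mem_nhdsGT_iff_exists_Ioo_subset.mp hev
    have hmono : StrictMonoOn f (Set.Icc t c) := by
      apply strictMonoOn_of_deriv_pos (convex_Icc t c)
      · exact fun x _ => (hd1 x).continuousAt.continuousWithinAt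
      · intro x hx
        rw [interior_Icc] at hx
        exact hsub hx
    have hle : ∀ᶠ x in 𝓝[>] t, f x ≤ f t := hmax.filter_mono nhdsWithin_le_nhds
    have hmem : Set.Ioo t c ∈ 𝓝[>] t := Ioo_mem_nhdsGT_of_mem ⟨le_refl t, hc⟩
    obtain ⟨x, hx1, hx2⟩ := (hle.and (eventually_mem_set.mpr hmem)).exists
    have : f t < f x := hmono ⟨le_refl t, hc.le⟩ ⟨hx2.1.le, hx2.2.le⟩ hx2.1
    linarith
  · rintro ⟨h1, h2⟩
    apply isLocalMax_of_deriv' (hd1 t).continuousAt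
    · exact Filter.Eventually.of_forall fun x => (hd1 x).differentiableAt
    · exact Filter.Eventually.of_forall fun x => (hd1 x).differentiableAt
    · filter_upwards [sign_left (hd2 t) h1 (ne_of_lt h2)] with x hx
      exact le_of_lt (hx.1.mpr h2)
    · filter_upwards [sign_right (hd2 t) h1 (ne_of_lt h2)] with x hx
      rcases lt_or_gt_of_ne hx.2 with h | h
      · exact h.le
      · exact absurd (hx.1.mp h) (not_lt.mpr h2.le)

/-- For a smooth `L`-periodic function `f` with `(f'(t), f''(t)) ≠ (0,0)` for all `t`,
the winding number of the closed plane curve `t ↦ (f'(t), f''(t))` about the origin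
equals minus the number of local maxima of `f` in one period. -/
theorem stmt12 (f : ℝ → ℝ) (L : ℝ) (n : ℕ)
    (hf : ContDiff ℝ (⊤ : ℕ∞) f) (hL : 0 < L) (hper : ∀ t, f (t + L) = f t)
    (hreg : ∀ t, (deriv f t, deriv (deriv f) t) ≠ (0, 0))
    (hfin : {t ∈ Set.Ico 0 L | IsLocalMax f t}.Finite)
    (hcard : {t ∈ Set.Ico 0 L | IsLocalMax f t}.ncard = n) :
    (1 / (2 * Real.pi)) * ∫ t in (0:ℝ)..L,
        (deriv f t * deriv (deriv (deriv f)) t - (deriv (deriv f) t) ^ 2)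
          / ((deriv f t) ^ 2 + (deriv (deriv f) t) ^ 2)
      = -(n : ℝ) := by
  -- basic calculus facts
  have hfi : ContDiff ℝ ((⊤:ℕ∞) : WithTop ℕ∞) f := hf.of_le (by simp)
  have hdiff1 : Differentiable ℝ f := (contDiff_infty_iff_deriv.mp hfi).1
  have hf1 : ContDiff ℝ ((⊤:ℕ∞) : WithTop ℕ∞) (deriv f) := (contDiff_infty_iff_deriv.mp hfi).2
  have hf2 : ContDiff ℝ ((⊤:ℕ∞) : WithTop ℕ∞) (deriv (deriv f)) :=
    (contDiff_infty_iff_deriv.mp hf1).2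
  have hd1 : ∀ x, HasDerivAt f (deriv f x) x := fun x => (hdiff1 x).hasDerivAt
  have hd2 : ∀ x, HasDerivAt (deriv f) (deriv (deriv f) x) x :=
    fun x => ((contDiff_infty_iff_deriv.mp hf1).1 x).hasDerivAt
  have hd3 : ∀ x, HasDerivAt (deriv (deriv f)) (deriv (deriv (deriv f)) x) x :=
    fun x => ((contDiff_infty_iff_deriv.mp hf2).1 x).hasDerivAt
  have hc3 : Continuous (deriv (deriv (deriv f))) :=
    ((contDiff_infty_iff_deriv.mp hf2).2).continuous
  have hreg' : ∀ t, (deriv f t) ^ 2 + (deriv (deriv f) t) ^ 2 ≠ 0 := by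
    intro t h
    have h1 : deriv f t = 0 := by
      have := sq_nonneg (deriv f t); have := sq_nonneg (deriv (deriv f) t)
      have h2 : (deriv f t) ^ 2 = 0 := by linarith
      exact pow_eq_zero_iff (by norm_num) |>.mp h2
    have h2 : deriv (deriv f) t = 0 := by
      have := sq_nonneg (deriv f t); have := sq_nonneg (deriv (deriv f) t)
      have h2 : (deriv (deriv f) t) ^ 2 = 0 := by linarith
      exact pow_eq_zero_iff (by norm_num) |>.mp h2
    exact hreg t (by rw [h1, h2])
  have hregz : ∀ t, deriv f t = 0 → deriv (deriv f) t ≠ 0 := by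
    intro t h1 h2; exact hreg t (by rw [h1, h2])
  -- periodicity of derivatives
  have hper1 : ∀ t, deriv f (t + L) = deriv f t := by
    intro t
    have heq : (fun x => f (x + L)) = f := funext hper
    rw [← deriv_comp_add_const f L t, heq]
  have hper2 : ∀ t, deriv (deriv f) (t + L) = deriv (deriv f) t := by
    intro t
    have heq : (fun x => deriv f (x + L)) = deriv f := funext hper1
    rw [← deriv_comp_add_const (deriv f) L t, heq]
  have hper3 : ∀ t, deriv (deriv (deriv f)) (t + L) = deriv (deriv (deriv f)) t := by
    intro t
    have heq : (fun x => deriv (deriv f) (x + L)) = deriv (deriv f) := funext hper2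
    rw [← deriv_comp_add_const (deriv (deriv f)) L t, heq]
  set g : ℝ → ℝ := fun t =>
    (deriv f t * deriv (deriv (deriv f)) t - (deriv (deriv f) t) ^ 2)
      / ((deriv f t) ^ 2 + (deriv (deriv f) t) ^ 2) with hgdef
  have hgper : Function.Periodic g L := by
    intro t; simp only [hgdef, hper1, hper2, hper3]
  have hgcont : Continuous g := by
    apply Continuous.div
    · exact ((hf1.continuous.mul hc3).sub ((hf2.continuous).pow 2))
    · exact ((hf1.continuous.pow 2).add ((hf2.continuous).pow 2))
    · exact hreg'
  -- the set of critical points in one period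
  set C : Set ℝ := {t ∈ Set.Ico 0 L | deriv f t = 0} with hCdef
  have hCfin : C.Finite :=
    (zeros_finite hd2 hregz 0 L).subset (fun t ht => ⟨⟨ht.1.1, ht.1.2.le⟩, ht.2⟩)
  -- C is nonempty
  have hCne : C.Nonempty := by
    obtain ⟨x, hxI, hxmax⟩ := isCompact_Icc.exists_isMaxOn (α := ℝ)
      (Set.nonempty_Icc.mpr hL.le) (hf.continuous.continuousOn (s := Set.Icc 0 L))
    have hglob : ∀ t, f t ≤ f x := by
      intro t
      have hperF : Function.Periodic f L := hper
      obtain ⟨y, hy, hty⟩ := hperF.exists_mem_Ico₀ hL t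
      rw [hty]
      exact hxmax ⟨hy.1, hy.2.le⟩
    by_cases hxL : x = L
    · refine ⟨0, ⟨⟨le_refl 0, hL⟩, ?_⟩⟩
      have hmax0 : IsLocalMax f 0 := Filter.Eventually.of_forall fun t => by
        have hL0 : f L = f 0 := by have := hper 0; rwa [zero_add] at this
        exact (hglob t).trans (by rw [hxL]; exact hL0.le)
      exact hmax0.deriv_eq_zero
    · refine ⟨x, ⟨⟨hxI.1, lt_of_le_of_ne hxI.2 hxL⟩, ?_⟩⟩
      have hmax0 : IsLocalMax f x := Filter.Eventually.of_forall hglob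
      exact hmax0.deriv_eq_zero
  -- enumeration of critical points
  classical
  set s : Finset ℝ := hCfin.toFinset with hsdef
  set m : ℕ := s.card with hmdef
  have hmem_s : ∀ t, t ∈ s ↔ t ∈ C := fun t => hCfin.mem_toFinset
  have hsne : s.Nonempty := by
    obtain ⟨c, hc⟩ := hCne
    exact ⟨c, (hmem_s c).mpr hc⟩
  have hm0 : 0 < m := Finset.card_pos.mpr hsne
  set e := s.orderIsoOfFin hmdef.symm with hedef
  set w : ℕ → ℝ := fun i => if h : i < m then (e ⟨i, h⟩ : ℝ) else (e ⟨0, hm0⟩ : ℝ) + L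
    with hwdef
  have hwlt : ∀ i (h : i < m), w i = (e ⟨i, h⟩ : ℝ) := fun i h => dif_pos h
  have hwm : w m = w 0 + L := by
    rw [hwdef]
    simp only [lt_irrefl, dif_neg, dif_pos hm0, not_lt.mpr (le_refl m)]
    simp [hm0]
  have hwC : ∀ i (h : i < m), w i ∈ C := fun i h => by
    rw [hwlt i h]; exact (hmem_s _).mp (e ⟨i, h⟩).2
  have hzero : ∀ i, i ≤ m → deriv f (w i) = 0 := by
    intro i hi
    rcases lt_or_eq_of_le hi with h | h
    · exact (hwC i h).2
    · rw [h, hwm, hper1]; exact (hwC 0 hm0).2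
  have hw0le : ∀ c ∈ C, w 0 ≤ c := by
    intro c hc
    have hcs : c ∈ s := (hmem_s c).mpr hc
    have h1 : e ⟨0, hm0⟩ ≤ e (e.symm ⟨c, hcs⟩) :=
      e.monotone (by rw [Fin.le_def]; exact Nat.zero_le _)
    rw [e.apply_symm_apply] at h1
    rw [hwlt 0 hm0]
    exact_mod_cast h1
  have hw0pos : 0 ≤ w 0 := (hwC 0 hm0).1.1
  have hw0L : w 0 < L := (hwC 0 hm0).1.2
  have hwmono : ∀ i, i < m → w i < w (i + 1) := by
    intro i hi
    by_cases h : i + 1 < m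
    · rw [hwlt i hi, hwlt (i + 1) h]
      exact_mod_cast e.strictMono (by rw [Fin.lt_def]; exact Nat.lt_succ_self i)
    · have hwiL : w i < L := (hwC i hi).1.2
      have hwi1 : w (i + 1) = (e ⟨0, hm0⟩ : ℝ) + L := dif_neg h
      rw [hwi1]
      have : 0 ≤ (e ⟨0, hm0⟩ : ℝ) := by rw [← hwlt 0 hm0]; exact hw0pos
      linarith
  have hw0lei : ∀ i, i < m → w 0 ≤ w i := by
    intro i hi
    rw [hwlt 0 hm0, hwlt i hi]
    exact_mod_cast e.monotone (by rw [Fin.le_def]; exact Nat.zero_le _)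
  have hwub : ∀ i, i ≤ m → w i ≤ w 0 + L := by
    intro i hi
    rcases lt_or_eq_of_le hi with h | h
    · have : w i < L := (hwC i h).1.2
      linarith
    · rw [h, hwm]
  have hno : ∀ i, i < m → ∀ t ∈ Set.Ioo (w i) (w (i + 1)), deriv f t ≠ 0 := by
    intro i hi t ht hzt
    have ht0 : w 0 < t := lt_of_le_of_lt (hw0lei i hi) ht.1
    have htub : t < w 0 + L := lt_of_lt_of_le ht.2 (hwub (i + 1) hi)
    by_cases hL' : t < L
    · have htC : t ∈ C := ⟨⟨le_trans hw0pos ht0.le, hL'⟩, hzt⟩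
      have hts : t ∈ s := (hmem_s t).mpr htC
      set j := e.symm ⟨t, hts⟩ with hj
      have hjt : (e j : ℝ) = t := by rw [hj, e.apply_symm_apply]
      have hlow : i < j.val := by
        have : e ⟨i, hi⟩ < e j := by
          rw [← Subtype.coe_lt_coe, hjt]
          rw [hwlt i hi] at ht
          exact ht.1
        have := e.lt_iff_lt.mp this
        rwa [Fin.lt_def] at this
      by_cases h : i + 1 < m
      · have hhigh : j.val < i + 1 := by
          have : e j < e ⟨i + 1, h⟩ := by
            rw [← Subtype.coe_lt_coe, hjt]
            rw [hwlt (i + 1) h] at ht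
            exact ht.2
          have := e.lt_iff_lt.mp this
          rwa [Fin.lt_def] at this
        omega
      · have : i + 1 = m := by omega
        have := j.isLt
        omega
    · have h1 : t - L ∈ C := by
        refine ⟨⟨by linarith, by linarith⟩, ?_⟩
        have := hper1 (t - L)
        rw [sub_add_cancel] at this
        rw [this] at hzt
        exact hzt
      have := hw0le _ h1
      linarith
  -- the integral over a period
  have hIeq : (∫ t in (0:ℝ)..L, g t) = ∫ t in (w 0)..(w 0 + L), g t := by
    have := hgper.intervalIntegral_add_eq (w 0) 0
    rw [this, zero_add]
  have hadj : ∀ k < m, IntervalIntegrable g volume (w k) (w (k + 1)) :=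
    fun k _ => hgcont.intervalIntegrable _ _
  have hsum := intervalIntegral.sum_integral_adjacent_intervals hadj
  have heach : ∀ k ∈ Finset.range m, (∫ t in (w k)..(w (k + 1)), g t) = -π := by
    intro k hk
    rw [Finset.mem_range] at hk
    exact key_interval hd2 hd3 hc3 hreg' (hwmono k hk) (hzero k hk.le) (hzero (k + 1) hk)
      (hno k hk)
  have htot : (∫ t in (0:ℝ)..L, g t) = (m : ℝ) * (-π) := by
    rw [hIeq, ← hwm, ← hsum, Finset.sum_congr rfl heach]
    simp [Finset.sum_const, Finset.card_range, nsmul_eq_mul]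
  -- counting: alternation of signs of the second derivative
  haveI : NeZero m := ⟨hm0.ne'⟩
  set N : Finset (Fin m) := Finset.univ.filter (fun i => deriv (deriv f) (w i.val) < 0)
    with hNdef
  set P : Finset (Fin m) := Finset.univ.filter (fun i => 0 < deriv (deriv f) (w i.val))
    with hPdef
  have hvalz : ∀ i : ℕ, i ≤ m → deriv (deriv f) (w i) ≠ 0 := fun i hi => hregz _ (hzero i hi)
  have hstep : ∀ i : ℕ, i < m →
      (deriv (deriv f) (w i) < 0 ↔ 0 < deriv (deriv f) (w (i + 1))) := fun i hi =>
    alternate hd2 (hwmono i hi) (hzero i hi.le) (hzero (i + 1) hi) (hvalz i hi.le)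
      (hvalz (i + 1) hi) (hno i hi)
  have hsuccval : ∀ i : Fin m, (i + 1 : Fin m).val = if i.val + 1 < m then i.val + 1 else 0 := by
    intro i
    have h1 : (i + 1 : Fin m).val = (i.val + (1 : Fin m).val) % m := Fin.val_add i 1
    have h2 : (1 : Fin m).val = 1 % m := Fin.val_one' m
    have h3 := i.isLt
    rw [h1, h2]
    rcases Nat.lt_or_ge (i.val + 1) m with h | h
    · rw [if_pos h]
      have e1 : 1 % m = 1 := Nat.mod_eq_of_lt (by omega)
      rw [e1, Nat.mod_eq_of_lt h]
    · rw [if_neg (by omega)]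
      by_cases hm1 : m = 1
      · have h4 : i.val = 0 := by have := i.isLt; omega
        have h5 : 1 % m = 0 := by rw [hm1]
        rw [h5, h4]
        simp
      · have e1 : 1 % m = 1 := Nat.mod_eq_of_lt (by omega)
        have e2 : i.val + 1 = m := by omega
        rw [e1, e2, Nat.mod_self]
  have hkey : ∀ i : Fin m,
      (deriv (deriv f) (w i.val) < 0 ↔ 0 < deriv (deriv f) (w ((i + 1 : Fin m)).val)) := by
    intro i
    rw [hsuccval i]
    by_cases h : i.val + 1 < m
    · rw [if_pos h]
      exact hstep i.val i.isLt
    · rw [if_neg h]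
      have hm' : i.val + 1 = m := by have := i.isLt; omega
      have hs := hstep i.val i.isLt
      rw [hm', hwm, hper2] at hs
      exact hs
  have hNP : N.card = P.card := by
    apply le_antisymm
    · apply Finset.card_le_card_of_injOn (fun i => i + 1)
      · intro i hi
        rw [hNdef, Finset.mem_coe, Finset.mem_filter] at hi
        rw [hPdef, Finset.mem_coe, Finset.mem_filter]
        exact ⟨Finset.mem_univ _, (hkey i).mp hi.2⟩
      · intro a _ b _ hab
        exact add_left_injective 1 hab
    · apply Finset.card_le_card_of_injOn (fun i => i + 1)
      · intro i hi
        rw [hPdef, Finset.mem_coe, Finset.mem_filter] at hi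
        rw [hNdef, Finset.mem_coe, Finset.mem_filter]
        refine ⟨Finset.mem_univ _, ?_⟩
        by_contra hcon
        have hne := hvalz ((i + 1 : Fin m)).val (le_of_lt (i + 1 : Fin m).isLt)
        have hpos : 0 < deriv (deriv f) (w ((i + 1 : Fin m)).val) :=
          lt_of_le_of_ne (not_lt.mp hcon) (Ne.symm hne)
        have := (hkey i).mpr hpos
        linarith [hi.2]
      · intro a _ b _ hab
        exact add_left_injective 1 hab
  have hcardNP : N.card + P.card = m := by
    have hdisj : Disjoint N P := by
      rw [Finset.disjoint_left]
      intro i hiN hiP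
      rw [hNdef, Finset.mem_filter] at hiN
      rw [hPdef, Finset.mem_filter] at hiP
      linarith [hiN.2, hiP.2]
    have hun : N ∪ P = Finset.univ := by
      apply Finset.eq_univ_of_forall
      intro i
      rw [Finset.mem_union, hNdef, hPdef, Finset.mem_filter, Finset.mem_filter]
      rcases lt_or_gt_of_ne (hvalz i.val (le_of_lt i.isLt)) with h | h
      · exact Or.inl ⟨Finset.mem_univ _, h⟩
      · exact Or.inr ⟨Finset.mem_univ _, h⟩
    rw [← Finset.card_union_of_disjoint hdisj, hun, Finset.card_univ, Fintype.card_fin]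
  have hm2 : m = 2 * N.card := by omega
  -- identify local maxima with the critical points having negative second derivative
  have hwinj : ∀ i : Fin m, w i.val = (e i : ℝ) := by
    intro i
    rw [hwlt i.val i.isLt]
  have himage : {t ∈ Set.Ico 0 L | IsLocalMax f t} = (fun i : Fin m => w i.val) '' ↑N := by
    ext t
    constructor
    · rintro ⟨htI, hmax⟩
      obtain ⟨h1, h2⟩ := (max_iff hd1 hd2 hregz t).mp hmax
      have hts : t ∈ s := (hmem_s t).mpr ⟨htI, h1⟩
      refine ⟨e.symm ⟨t, hts⟩, ?_, ?_⟩
      · have hwt : w (e.symm ⟨t, hts⟩).val = t := by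
          rw [hwinj, e.apply_symm_apply]
        rw [Finset.mem_coe, hNdef, Finset.mem_filter]
        exact ⟨Finset.mem_univ _, by rw [hwt]; exact h2⟩
      · show w (e.symm ⟨t, hts⟩).val = t
        rw [hwinj, e.apply_symm_apply]
    · rintro ⟨i, hiN, rfl⟩
      rw [Finset.mem_coe, hNdef, Finset.mem_filter] at hiN
      have hiC := hwC i.val i.isLt
      exact ⟨hiC.1, (max_iff hd1 hd2 hregz _).mpr ⟨hiC.2, hiN.2⟩⟩
  have hn : (n : ℕ) = N.card := by
    rw [← hcard, himage, Set.ncard_image_of_injOn, Set.ncard_coe_finset]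
    intro a _ b _ hab
    have hab' : w (a : Fin m).val = w (b : Fin m).val := hab
    rw [hwinj, hwinj] at hab'
    exact e.injective (Subtype.coe_injective hab')
  -- conclusion
  rw [htot, hm2, hn]
  have hπ : (π : ℝ) ≠ 0 := Real.pi_ne_zero
  push_cast
  rw [div_mul_eq_mul_div, one_mul, div_eq_iff (mul_ne_zero two_ne_zero hπ)]
  ring
end
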